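/- arXiv:1905.04861 — 6 statements merged into one kernel-verified Lean document; each statement's English description precedes it below -/
import Mathlib

section
/- Let (Ω, ℱ₂, P) be a probability space with sub-σ-algebras ℱ₁ ⊆ ℱ₂, and suppose ℱ₂ is atomless conditionally to ℱ₁. Then for any two integrable ℱ₁-measurable random variables f, g : Ω → ℝ there exist integrable ℱ₂-measurable random variables ξ, η : Ω → ℝ such that ξ and η are commonotone, E[ξ ∣ ℱ₁] = f almost surely, and E[η ∣ ℱ₁] = g almost surely. -/
/-
Conditional atomlessness lets one realise every `m1`-measurable weight `0 ≤ v ≤ E[1_A | m1]`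
as `E[1_C | m1]` for some `C ⊆ A`: a greedy exhaustion produces a set `C ⊆ A` with
`E[1_C | m1] ≤ v` that cannot be enlarged by a non-null set, and pieces obtained by iterated
halving show that such a `C` leaves no gap. Now write `f = a + b` and `g = 2 a + b / 2` with
`a, b` `m1`-measurable, pick an `m1`-measurable scale `q = 16 ^ n ≥ |a| + |b|` and disjoint
`C₁, C₂` with `E[1_C₁ | m1] = |a| / (4 q)` and `E[1_C₂ | m1] = |b| / q`. The variable `ζ`
equal to `± 4 q` on `C₁` and `± q` on `C₂` (signs of `a` and `b`) has `E[ζ | m1] = a + b`.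
As the values `4 * 16 ^ n` and `16 ^ n` interleave, one nondecreasing odd function doubles
the former and halves the latter, and applied to `ζ` it gives `η` with `E[η | m1] = 2 a + b / 2`.
-/

open MeasureTheory ProbabilityTheory

/-- The conditional expectation of the indicator of a set, as a real-valued function. -/
noncomputable def condIndicator {Ω : Type*} (m1 : MeasurableSpace Ω) [MeasurableSpace Ω]
    (μ : Measure Ω) (A : Set Ω) : Ω → ℝ :=
  μ[A.indicator (fun _ => (1 : ℝ)) | m1]

/-- The ambient σ-algebra is atomless conditionally to `m1`: for every measurable set `A`
there is a measurable `B ⊆ A` with `0 < E[1_B ∣ m1] < E[1_A ∣ m1]` a.s. on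
`{E[1_A ∣ m1] > 0}`. -/
def CondAtomless {Ω : Type*} (m1 : MeasurableSpace Ω) [MeasurableSpace Ω]
    (μ : Measure Ω) : Prop :=
  ∀ A : Set Ω, MeasurableSet A →
    ∃ B : Set Ω, MeasurableSet B ∧ B ⊆ A ∧
      ∀ᵐ ω ∂μ, 0 < condIndicator m1 μ A ω →
        0 < condIndicator m1 μ B ω ∧ condIndicator m1 μ B ω < condIndicator m1 μ A ω

/-- Two real random variables are commonotone if both are a.s. equal to nondecreasing
functions of a common random variable. -/
def Commonotone {Ω : Type*} [MeasurableSpace Ω] (μ : Measure Ω) (ξ η : Ω → ℝ) : Prop :=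
  ∃ (f g : ℝ → ℝ) (ζ : Ω → ℝ), Monotone f ∧ Monotone g ∧ Measurable ζ ∧
    ξ =ᵐ[μ] (fun ω => f (ζ ω)) ∧ η =ᵐ[μ] (fun ω => g (ζ ω))

open Set Filter Topology
open scoped ENNReal

section Exhaustion

variable {Ω : Type*} [MeasurableSpace Ω] {μ : Measure Ω}

lemma ae_le_of_forall_ae_le_add {f g : Ω → ℝ} {u : ℕ → Ω → ℝ} (hu : ∀ n, 0 ≤ᵐ[μ] u n)
    (hui : ∀ n, Integrable (u n) μ)
    (hlim : Tendsto (fun n => ∫ ω, u n ω ∂μ) atTop (𝓝 0)) (hle : ∀ n, f ≤ᵐ[μ] g + u n) :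
    f ≤ᵐ[μ] g := by
  have hu' : ∀ᵐ ω ∂μ, ∀ n, 0 ≤ u n ω := ae_all_iff.2 hu
  set L : Ω → ℝ := fun ω => ⨅ n, u n ω
  have hL0 : 0 ≤ᵐ[μ] L := by
    filter_upwards [hu'] with ω h using le_ciInf h
  have hLle : ∀ n, L ≤ᵐ[μ] u n := fun n => by
    filter_upwards [hu'] with ω h
    exact ciInf_le ⟨0, by rintro _ ⟨k, rfl⟩; exact h k⟩ n
  have hLi : Integrable L μ := by
    refine (hui 0).mono' (AEMeasurable.iInf fun n => (hui n).aemeasurable).aestronglyMeasurable ?_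
    filter_upwards [hL0, hLle 0] with ω h₀ h₁
    rwa [Real.norm_of_nonneg h₀]
  have hL : L =ᵐ[μ] 0 := by
    refine (integral_eq_zero_iff_of_nonneg_ae hL0 hLi).1
      (le_antisymm ?_ (integral_nonneg_of_ae hL0))
    exact ge_of_tendsto' hlim fun n => integral_mono_ae hLi (hui n) (hLle n)
  filter_upwards [ae_all_iff.2 hle, hL] with ω h hLω
  have : f ω - g ω ≤ L ω := le_ciInf fun n => by linarith [h n, Pi.add_apply g (u n) ω]
  simp only [hLω, Pi.zero_apply] at this
  linarith

lemma tendsto_measure_add_one_sdiff [IsFiniteMeasure μ] {E : ℕ → Set Ω}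
    (hE : ∀ n, MeasurableSet (E n)) (hmono : Monotone E) :
    Tendsto (fun n => μ (E (n + 1) \ E n)) atTop (𝓝 0) := by
  have hsum : ∑' n, μ (disjointed E n) ≠ ∞ := by
    rw [← measure_iUnion (disjoint_disjointed E) (.disjointed hE)]
    exact measure_ne_top μ _
  simpa only [hmono.disjointed_add_one] using
    (tendsto_add_atTop_iff_nat 1).2 (ENNReal.tendsto_atTop_zero_of_tsum_ne_top hsum)

theorem exists_mem_forall_measure_diff_eq_zero [IsFiniteMeasure μ] {𝒞 : Set (Set Ω)}
    (h𝒞 : ∀ E ∈ 𝒞, MeasurableSet E) {E₀ : Set Ω} (hE₀ : E₀ ∈ 𝒞)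
    (hU : ∀ E : ℕ → Set Ω, Monotone E → (∀ n, E n ∈ 𝒞) → ⋃ n, E n ∈ 𝒞) :
    ∃ E ∈ 𝒞, ∀ F ∈ 𝒞, E ⊆ F → μ (F \ E) = 0 := by
  set δ : Set Ω → ℝ≥0∞ := fun E => ⨆ F ∈ 𝒞, ⨆ (_ : E ⊆ F), μ (F \ E)
  have hδ : ∀ E, ∀ F ∈ 𝒞, E ⊆ F → μ (F \ E) ≤ δ E := fun E F hF hEF =>
    le_iSup₂_of_le F hF (le_iSup_of_le hEF le_rfl)
  have step : ∀ E : 𝒞, ∃ F : 𝒞, E.1 ⊆ F.1 ∧ δ E ≤ 2 * μ (F.1 \ E.1) := by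
    rintro ⟨E, hE⟩
    rcases eq_or_ne (δ E) 0 with h | h
    · exact ⟨⟨E, hE⟩, subset_rfl, by simp [h]⟩
    have hfin : δ E ≠ ∞ := ne_top_of_le_ne_top (measure_ne_top μ univ)
      (iSup₂_le fun F _ => iSup_le fun _ => measure_mono (subset_univ _))
    obtain ⟨F, hF⟩ := lt_iSup_iff.1 (ENNReal.half_lt_self h hfin)
    obtain ⟨hF, hF'⟩ := lt_iSup_iff.1 hF
    obtain ⟨hEF, hlt⟩ := lt_iSup_iff.1 hF'
    refine ⟨⟨F, hF⟩, hEF, ?_⟩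
    rw [ENNReal.div_lt_iff (by simp) (by simp)] at hlt
    rw [mul_comm]
    exact hlt.le
  choose next hnext_sup hnext using step
  set E : ℕ → Set Ω := fun n => (next^[n] ⟨E₀, hE₀⟩).1
  have hsucc : ∀ n, E (n + 1) = (next (next^[n] ⟨E₀, hE₀⟩)).1 := fun n => by
    simp only [E, Function.iterate_succ_apply']
  have hE : ∀ n, E n ∈ 𝒞 := fun n => (next^[n] ⟨E₀, hE₀⟩).2
  have hmono : Monotone E := monotone_nat_of_le_succ fun n => hsucc n ▸ hnext_sup _
  have hgap := tendsto_measure_add_one_sdiff (μ := μ) (fun n => h𝒞 _ (hE n)) hmono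
  have hgap₂ : Tendsto (fun n => 2 * μ (E (n + 1) \ E n)) atTop (𝓝 0) := by
    simpa using ENNReal.Tendsto.const_mul (a := 2) hgap (Or.inr (by simp))
  refine ⟨⋃ n, E n, hU E hmono hE, fun F hF hsub => nonpos_iff_eq_zero.1 ?_⟩
  refine ge_of_tendsto' hgap₂ fun n => ?_
  calc μ (F \ ⋃ n, E n) ≤ μ (F \ E n) :=
        measure_mono (sdiff_subset_sdiff_right (subset_iUnion E n))
    _ ≤ δ (E n) := hδ _ F hF ((subset_iUnion E n).trans hsub)
    _ ≤ 2 * μ (E (n + 1) \ E n) := hsucc n ▸ hnext _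

end Exhaustion

section CondIndicator

variable {Ω : Type*} {m : MeasurableSpace Ω} [mΩ : MeasurableSpace Ω] {μ : Measure Ω}

lemma integrable_indicator_one [IsFiniteMeasure μ] {A : Set Ω} (hA : MeasurableSet A) :
    Integrable (A.indicator fun _ => (1 : ℝ)) μ :=
  (integrable_indicator_iff hA).2 (integrable_const _).integrableOn

lemma condIndicator_nonneg (A : Set Ω) : 0 ≤ᵐ[μ] condIndicator m μ A :=
  condExp_nonneg (.of_forall fun _ => indicator_nonneg (fun _ _ => zero_le_one) _)

lemma stronglyMeasurable_condIndicator (A : Set Ω) :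
    StronglyMeasurable[m] (condIndicator m μ A) :=
  stronglyMeasurable_condExp

lemma integrable_condIndicator (A : Set Ω) : Integrable (condIndicator m μ A) μ :=
  integrable_condExp

lemma condIndicator_empty : condIndicator m μ (∅ : Set Ω) = 0 := by
  simp only [condIndicator, indicator_empty]
  exact condExp_zero

lemma condIndicator_univ [IsFiniteMeasure μ] (hm : m ≤ mΩ) :
    condIndicator m μ (univ : Set Ω) = 1 := by
  simp only [condIndicator, indicator_univ]
  exact condExp_const hm 1

lemma condIndicator_union [IsFiniteMeasure μ] {A B : Set Ω} (hA : MeasurableSet A)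
    (hB : MeasurableSet B) (hAB : Disjoint A B) :
    condIndicator m μ (A ∪ B) =ᵐ[μ] condIndicator m μ A + condIndicator m μ B := by
  rw [condIndicator, indicator_union_of_disjoint hAB]
  exact condExp_add (integrable_indicator_one hA) (integrable_indicator_one hB) m

lemma condIndicator_diff [IsFiniteMeasure μ] {A B : Set Ω} (hA : MeasurableSet A)
    (hB : MeasurableSet B) (hBA : B ⊆ A) :
    condIndicator m μ (A \ B) =ᵐ[μ] condIndicator m μ A - condIndicator m μ B := by
  filter_upwards [condIndicator_union (m := m) (μ := μ) (hA.diff hB) hB disjoint_sdiff_left]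
    with ω hω
  rw [sdiff_union_of_subset hBA] at hω
  simp [hω]

lemma condIndicator_inter [IsFiniteMeasure μ] {A S : Set Ω} (hA : MeasurableSet A)
    (hS : MeasurableSet[m] S) :
    condIndicator m μ (A ∩ S) =ᵐ[μ] S.indicator (condIndicator m μ A) := by
  rw [condIndicator, inter_comm, ← indicator_indicator]
  exact condExp_indicator (integrable_indicator_one hA) hS

lemma condIndicator_ite [IsFiniteMeasure μ] (hm : m ≤ mΩ) {A B S : Set Ω}
    (hA : MeasurableSet A) (hB : MeasurableSet B) (hS : MeasurableSet[m] S) :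
    condIndicator m μ (S.ite A B) =ᵐ[μ]
      S.indicator (condIndicator m μ A) + Sᶜ.indicator (condIndicator m μ B) := by
  filter_upwards [condIndicator_union (m := m) (μ := μ) (hA.inter (hm S hS))
      (hB.inter (hm S hS).compl) (disjoint_compl_right.mono inter_subset_right inter_subset_right),
    condIndicator_inter (μ := μ) hA hS, condIndicator_inter (μ := μ) hB hS.compl] with ω h h₁ h₂
  rw [Set.ite, sdiff_eq, h, Pi.add_apply, h₁, h₂, Pi.add_apply]

lemma condIndicator_of_measure_zero {A : Set Ω} (hA : μ A = 0) :
    condIndicator m μ A =ᵐ[μ] 0 := by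
  refine (condExp_congr_ae ?_).trans condExp_zero.eventuallyEq
  filter_upwards [measure_eq_zero_iff_ae_notMem.1 hA] with ω hω
  simp [hω]

lemma setIntegral_condIndicator [IsFiniteMeasure μ] (hm : m ≤ mΩ) {A S : Set Ω}
    (hA : MeasurableSet A) (hS : MeasurableSet[m] S) :
    ∫ ω in S, condIndicator m μ A ω ∂μ = μ.real (A ∩ S) := by
  rw [condIndicator, setIntegral_condExp hm (integrable_indicator_one hA) hS,
    setIntegral_indicator hA]
  simp [inter_comm]

lemma integral_condIndicator [IsFiniteMeasure μ] (hm : m ≤ mΩ) {A : Set Ω}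
    (hA : MeasurableSet A) : ∫ ω, condIndicator m μ A ω ∂μ = μ.real A := by
  rw [condIndicator, integral_condExp hm, integral_indicator hA]
  simp

end CondIndicator

section FiniteMeasure

variable {Ω : Type*} {m : MeasurableSpace Ω} [mΩ : MeasurableSpace Ω] {μ : Measure Ω}
  [IsFiniteMeasure μ]

lemma setLIntegral_eq_lintegral_mul_condIndicator (hm : m ≤ mΩ) {C : Set Ω}
    (hC : MeasurableSet C) {g : Ω → ℝ≥0∞} (hg : Measurable[m] g) :
    ∫⁻ ω in C, g ω ∂μ = ∫⁻ ω, ENNReal.ofReal (condIndicator m μ C ω) * g ω ∂μ := by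
  have hw : Measurable[m] fun ω => ENNReal.ofReal (condIndicator m μ C ω) :=
    ENNReal.measurable_ofReal.comp (stronglyMeasurable_condIndicator C).measurable
  have htrim : (μ.restrict C).trim hm =
      (μ.withDensity fun ω => ENNReal.ofReal (condIndicator m μ C ω)).trim hm := by
    refine @Measure.ext _ m _ _ fun S hS => ?_
    rw [trim_measurableSet_eq hm hS, trim_measurableSet_eq hm hS,
      Measure.restrict_apply (hm S hS), withDensity_apply _ (hm S hS),
      ← ofReal_integral_eq_lintegral_ofReal (integrable_condIndicator C).integrableOn
        (ae_restrict_of_ae (condIndicator_nonneg C)),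
      setIntegral_condIndicator hm hC hS, Measure.real, ENNReal.ofReal_toReal
        (measure_ne_top _ _), inter_comm]
  calc ∫⁻ ω in C, g ω ∂μ
      = ∫⁻ ω, g ω ∂((μ.restrict C).trim hm) := (lintegral_trim hm hg).symm
    _ = ∫⁻ ω, g ω ∂(μ.withDensity fun ω => ENNReal.ofReal (condIndicator m μ C ω)) := by
      rw [htrim, lintegral_trim hm hg]
    _ = _ := lintegral_withDensity_eq_lintegral_mul _ (hw.mono hm le_rfl) (hg.mono hm le_rfl)

lemma integrable_indicator_of_integrable_mul_condIndicator (hm : m ≤ mΩ) {C : Set Ω}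
    (hC : MeasurableSet C) {c : Ω → ℝ} (hc : StronglyMeasurable[m] c)
    (hcC : Integrable (c * condIndicator m μ C) μ) : Integrable (C.indicator c) μ := by
  refine (integrable_indicator_iff hC).2 ⟨(hc.mono hm).aestronglyMeasurable, ?_⟩
  have hg : Measurable[m] fun ω => ‖c ω‖ₑ := measurable_enorm.comp hc.measurable
  rw [HasFiniteIntegral, setLIntegral_eq_lintegral_mul_condIndicator hm hC hg]
  refine lt_of_eq_of_lt (lintegral_congr_ae ?_) hcC.2
  filter_upwards [condIndicator_nonneg (m := m) (μ := μ) C] with ω hω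
  rw [Pi.mul_apply, enorm_mul, Real.enorm_of_nonneg hω, mul_comm]

lemma condExp_indicator_eq_mul_condIndicator (hm : m ≤ mΩ) {C : Set Ω}
    (hC : MeasurableSet C) {c : Ω → ℝ} (hc : StronglyMeasurable[m] c)
    (hcC : Integrable (c * condIndicator m μ C) μ) :
    μ[C.indicator c | m] =ᵐ[μ] c * condIndicator m μ C := by
  have hmul : C.indicator c = c * C.indicator fun _ => (1 : ℝ) := by
    ext ω; by_cases hω : ω ∈ C <;> simp [hω]
  have hint := integrable_indicator_of_integrable_mul_condIndicator hm hC hc hcC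
  rw [hmul] at hint ⊢
  exact condExp_mul_of_stronglyMeasurable_left hc hint (integrable_indicator_one hC)

lemma condIndicator_iUnion_le (hm : m ≤ mΩ) {E : ℕ → Set Ω} (hE : ∀ n, MeasurableSet (E n))
    (hmono : Monotone E) {v : Ω → ℝ} (hv : ∀ n, condIndicator m μ (E n) ≤ᵐ[μ] v) :
    condIndicator m μ (⋃ n, E n) ≤ᵐ[μ] v := by
  have hU : MeasurableSet (⋃ n, E n) := .iUnion hE
  refine ae_le_of_forall_ae_le_add (u := fun n => condIndicator m μ ((⋃ n, E n) \ E n))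
    (fun n => condIndicator_nonneg _) (fun n => integrable_condIndicator _) ?_ fun n => ?_
  · have hμ : Tendsto (fun n => μ.real (E n)) atTop (𝓝 (μ.real (⋃ n, E n))) :=
      (ENNReal.tendsto_toReal (measure_ne_top μ _)).comp (tendsto_measure_iUnion_atTop hmono)
    simp_rw [integral_condIndicator hm (hU.diff (hE _)),
      measureReal_sdiff (μ := μ) (subset_iUnion E _) (hE _)]
    simpa using hμ.const_sub (μ.real (⋃ n, E n))
  · filter_upwards [hv n, condIndicator_diff (m := m) (μ := μ) hU (hE n) (subset_iUnion E n)]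
      with ω h₁ h₂
    simp only [Pi.add_apply, h₂, Pi.sub_apply]
    linarith

lemma measure_inter_ne_zero_of_condIndicator_pos {P T : Set Ω} (hP : MeasurableSet P)
    (hT : MeasurableSet[m] T) (hμT : μ T ≠ 0)
    (hpos : ∀ᵐ ω ∂μ, ω ∈ T → 0 < condIndicator m μ P ω) : μ (P ∩ T) ≠ 0 := by
  refine fun h => hμT (measure_eq_zero_iff_ae_notMem.2 ?_)
  filter_upwards [condIndicator_of_measure_zero (m := m) h, condIndicator_inter hP hT, hpos]
    with ω h₀ hi hp hωT
  rw [hi, indicator_of_mem hωT] at h₀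
  exact (hp hωT).ne' h₀

end FiniteMeasure

section Atomless

variable {Ω : Type*} {m : MeasurableSpace Ω} [mΩ : MeasurableSpace Ω] {μ : Measure Ω}
  [IsFiniteMeasure μ]

namespace CondAtomless

lemma exists_subset_condIndicator_le_half (hm : m ≤ mΩ) (hat : CondAtomless m μ) {A : Set Ω}
    (hA : MeasurableSet A) :
    ∃ B ⊆ A, MeasurableSet B ∧ ∀ᵐ ω ∂μ, 0 < condIndicator m μ A ω →
      0 < condIndicator m μ B ω ∧ condIndicator m μ B ω ≤ condIndicator m μ A ω / 2 := by
  obtain ⟨B, hB, hBA, hpos⟩ := hat A hA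
  set S := {ω | condIndicator m μ B ω ≤ condIndicator m μ (A \ B) ω}
  have hS : MeasurableSet[m] S := measurableSet_le
    (stronglyMeasurable_condIndicator B).measurable
    (stronglyMeasurable_condIndicator (A \ B)).measurable
  -- keep, pointwise over `ω`, the smaller of `B` and `A \ B`
  refine ⟨S.ite B (A \ B), union_subset (inter_subset_left.trans hBA)
    (sdiff_subset.trans sdiff_subset), (hm S hS).ite hB (hA.diff hB), ?_⟩
  filter_upwards [hpos, condIndicator_ite hm hB (hA.diff hB) hS,
    condIndicator_diff (m := m) (μ := μ) hA hB hBA] with ω hω hite hdiff hAω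
  obtain ⟨h₀, h₁⟩ := hω hAω
  rw [hite, Pi.add_apply]
  by_cases hωS : ω ∈ S
  · have hωS' : condIndicator m μ B ω ≤ condIndicator m μ (A \ B) ω := hωS
    rw [indicator_of_mem hωS, indicator_of_notMem (notMem_compl_iff.2 hωS)]
    simp only [hdiff, Pi.sub_apply] at hωS'
    constructor <;> linarith
  · have hωS' : condIndicator m μ (A \ B) ω < condIndicator m μ B ω := not_le.1 hωS
    rw [indicator_of_notMem hωS, indicator_of_mem (mem_compl hωS)]
    simp only [hdiff, Pi.sub_apply] at hωS' ⊢
    constructor <;> linarith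

lemma exists_subset_condIndicator_le_div_pow (hm : m ≤ mΩ) (hat : CondAtomless m μ)
    {A : Set Ω} (hA : MeasurableSet A) (n : ℕ) :
    ∃ B ⊆ A, MeasurableSet B ∧ ∀ᵐ ω ∂μ, 0 < condIndicator m μ A ω →
      0 < condIndicator m μ B ω ∧ condIndicator m μ B ω ≤ condIndicator m μ A ω / 2 ^ n := by
  induction n with
  | zero => exact ⟨A, subset_rfl, hA, .of_forall fun ω h => ⟨h, by simp⟩⟩
  | succ n ih =>
    obtain ⟨B, hBA, hB, hBpos⟩ := ih
    obtain ⟨B', hB'B, hB', hB'pos⟩ := exists_subset_condIndicator_le_half hm hat hB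
    refine ⟨B', hB'B.trans hBA, hB', ?_⟩
    filter_upwards [hBpos, hB'pos] with ω h h' hAω
    obtain ⟨h₀, h₁⟩ := h hAω
    obtain ⟨h₀', h₁'⟩ := h' h₀
    refine ⟨h₀', h₁'.trans ?_⟩
    rw [pow_succ, ← div_div]
    linarith

lemma exists_subset_condIndicator_le_of_pos (hm : m ≤ mΩ) (hat : CondAtomless m μ)
    {D : Set Ω} (hD : MeasurableSet D) {ε : Ω → ℝ} (hε : Measurable[m] ε) {S : Set Ω}
    (hS : MeasurableSet[m] S) (hμS : μ S ≠ 0)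
    (hpos : ∀ᵐ ω ∂μ, ω ∈ S → 0 < ε ω ∧ 0 < condIndicator m μ D ω) :
    ∃ P ⊆ D, MeasurableSet P ∧ ∃ T ⊆ S, MeasurableSet[m] T ∧ μ T ≠ 0 ∧
      ∀ᵐ ω ∂μ, ω ∈ T → 0 < condIndicator m μ P ω ∧ condIndicator m μ P ω ≤ ε ω := by
  choose P hPD hP hPpos using exists_subset_condIndicator_le_div_pow hm hat hD
  set T : ℕ → Set Ω := fun n => S ∩ {ω | condIndicator m μ (P n) ω ≤ ε ω}
  have hT : ∀ n, MeasurableSet[m] (T n) := fun n =>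
    hS.inter (measurableSet_le (stronglyMeasurable_condIndicator _).measurable hε)
  have hcover : S ≤ᵐ[μ] ⋃ n, T n := by
    filter_upwards [hpos, ae_all_iff.2 hPpos] with ω hω hPω hωS
    obtain ⟨hε₀, hD₀⟩ := hω hωS
    obtain ⟨n, hn⟩ := ((tendsto_pow_atTop_atTop_of_one_lt one_lt_two).eventually_gt_atTop
      (condIndicator m μ D ω / ε ω)).exists
    rw [div_lt_iff₀ hε₀, ← div_lt_iff₀' (by positivity)] at hn
    exact mem_iUnion.2 ⟨n, hωS, (hPω n hD₀).2.trans hn.le⟩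
  obtain ⟨n, hn⟩ : ∃ n, μ (T n) ≠ 0 := by
    by_contra! h
    exact hμS (measure_mono_null_ae hcover (measure_iUnion_null h))
  refine ⟨P n, hPD n, hP n, T n, inter_subset_left, hT n, hn, ?_⟩
  filter_upwards [hpos, hPpos n] with ω hω hPω hωT
  exact ⟨(hPω (hω hωT.1).2).1, hωT.2⟩

lemma exists_superset_condIndicator_le (hm : m ≤ mΩ) (hat : CondAtomless m μ) {A E : Set Ω}
    (hA : MeasurableSet A) (hE : MeasurableSet E) (hEA : E ⊆ A) {v : Ω → ℝ}
    (hv : Measurable[m] v) (hEv : condIndicator m μ E ≤ᵐ[μ] v)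
    (hvA : v ≤ᵐ[μ] condIndicator m μ A) (hgap : μ {ω | condIndicator m μ E ω < v ω} ≠ 0) :
    ∃ F, MeasurableSet F ∧ E ⊆ F ∧ F ⊆ A ∧ condIndicator m μ F ≤ᵐ[μ] v ∧ μ (F \ E) ≠ 0 := by
  have hcE := (stronglyMeasurable_condIndicator (m := m) (μ := μ) E).measurable
  obtain ⟨P, hPD, hP, T, -, hT, hμT, hPT⟩ := exists_subset_condIndicator_le_of_pos hm hat
    (hA.diff hE) (hv.sub hcE) (measurableSet_lt hcE hv) hgap (by
      filter_upwards [condIndicator_diff (m := m) (μ := μ) hA hE hEA, hvA] with ω hD hvω hωS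
      have hωS' : condIndicator m μ E ω < v ω := hωS
      simp only [hD, Pi.sub_apply]
      constructor <;> linarith)
  have hdisj : Disjoint E (P ∩ T) :=
    disjoint_sdiff_right.mono_right (inter_subset_left.trans hPD)
  -- add the piece `P` only where it fits under the gap `v - E[1_E | m]`
  refine ⟨E ∪ (P ∩ T), hE.union (hP.inter (hm T hT)), subset_union_left,
    union_subset hEA (inter_subset_left.trans (hPD.trans sdiff_subset)), ?_, ?_⟩
  · filter_upwards [condIndicator_union (m := m) (μ := μ) hE (hP.inter (hm T hT)) hdisj,
      condIndicator_inter (μ := μ) hP hT, hEv, hPT] with ω hu hi hEω hPω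
    rw [hu, Pi.add_apply, hi]
    by_cases hωT : ω ∈ T
    · have := (hPω hωT).2
      rw [indicator_of_mem hωT]
      simp only [Pi.sub_apply] at this
      linarith
    · simpa [indicator_of_notMem hωT] using hEω
  · rw [union_sdiff_left, hdisj.symm.sdiff_eq_left]
    exact measure_inter_ne_zero_of_condIndicator_pos hP hT hμT
      (by filter_upwards [hPT] with ω h hωT using (h hωT).1)

theorem exists_subset_condIndicator_eq (hm : m ≤ mΩ) (hat : CondAtomless m μ) {A : Set Ω}
    (hA : MeasurableSet A) {v : Ω → ℝ} (hv : Measurable[m] v) (hv₀ : 0 ≤ᵐ[μ] v)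
    (hvA : v ≤ᵐ[μ] condIndicator m μ A) :
    ∃ C ⊆ A, MeasurableSet C ∧ condIndicator m μ C =ᵐ[μ] v := by
  obtain ⟨E, ⟨hE, hEA, hEv⟩, hmax⟩ := exists_mem_forall_measure_diff_eq_zero (μ := μ)
    (𝒞 := {E | MeasurableSet E ∧ E ⊆ A ∧ condIndicator m μ E ≤ᵐ[μ] v}) (fun E hE => hE.1)
    (E₀ := ∅) ⟨.empty, empty_subset A, by rwa [condIndicator_empty]⟩
    fun E hmono hE => ⟨.iUnion fun n => (hE n).1, iUnion_subset fun n => (hE n).2.1,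
      condIndicator_iUnion_le hm (fun n => (hE n).1) hmono fun n => (hE n).2.2⟩
  have hgap : μ {ω | condIndicator m μ E ω < v ω} = 0 := by
    by_contra hgap
    obtain ⟨F, hF, hEF, hFA, hFv, hμF⟩ :=
      exists_superset_condIndicator_le hm hat hA hE hEA hv hEv hvA hgap
    exact hμF (hmax F ⟨hF, hFA, hFv⟩ hEF)
  refine ⟨E, hEA, hE, ?_⟩
  filter_upwards [hEv, measure_eq_zero_iff_ae_notMem.1 hgap] with ω h₁ h₂
  exact le_antisymm h₁ (not_lt.1 h₂)

lemma exists_disjoint_condIndicator_eq (hm : m ≤ mΩ) (hat : CondAtomless m μ)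
    {w₁ w₂ : Ω → ℝ} (hw₁ : Measurable[m] w₁) (hw₂ : Measurable[m] w₂)
    (h₁ : ∀ ω, 0 ≤ w₁ ω) (h₂ : ∀ ω, 0 ≤ w₂ ω) (hw : ∀ ω, w₁ ω + w₂ ω ≤ 1) :
    ∃ C₁ C₂ : Set Ω, MeasurableSet C₁ ∧ MeasurableSet C₂ ∧ Disjoint C₁ C₂ ∧
      condIndicator m μ C₁ =ᵐ[μ] w₁ ∧ condIndicator m μ C₂ =ᵐ[μ] w₂ := by
  obtain ⟨C₁, -, hC₁, hw₁'⟩ := exists_subset_condIndicator_eq hm hat .univ hw₁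
    (.of_forall h₁) (.of_forall fun ω => by
      rw [condIndicator_univ hm, Pi.one_apply]
      linarith [hw ω, h₂ ω])
  obtain ⟨C₂, hC₂, hC₂m, hw₂'⟩ :=
    exists_subset_condIndicator_eq hm hat (MeasurableSet.univ.diff hC₁) hw₂
    (.of_forall h₂) (by
      filter_upwards [condIndicator_diff (m := m) (μ := μ) .univ hC₁ (subset_univ _), hw₁']
        with ω hd h
      rw [hd, condIndicator_univ hm, Pi.sub_apply, h, Pi.one_apply]
      linarith [hw ω])
  exact ⟨C₁, C₂, hC₁, hC₂m, disjoint_sdiff_right.mono_right hC₂, hw₁', hw₂'⟩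

end CondAtomless

end Atomless

-- Equal to `± 2 * 4 ^ k` on `± [4 ^ k, 4 ^ (k + 2))` for odd `k`,
-- so it doubles `4 * 16 ^ n` and halves `16 ^ n`.
noncomputable def doubleHalf (x : ℝ) : ℝ :=
  SignType.sign x * (8 * 16 ^ Int.log 16 (|x| / 4))

lemma doubleHalf_zero : doubleHalf 0 = 0 := by
  simp [doubleHalf]

lemma doubleHalf_neg (x : ℝ) : doubleHalf (-x) = -doubleHalf x := by
  simp [doubleHalf, Left.sign_neg, neg_mul]

lemma doubleHalf_of_pos {x : ℝ} (hx : 0 < x) : doubleHalf x = 8 * 16 ^ Int.log 16 (x / 4) := by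
  simp [doubleHalf, sign_pos hx, abs_of_pos hx]

lemma monotone_doubleHalf : Monotone doubleHalf := by
  refine monotone_of_odd_of_monotoneOn_nonneg doubleHalf_neg fun x hx y hy hxy => ?_
  rcases (mem_Ici.1 hy).eq_or_lt with rfl | hy₀
  · rw [le_antisymm hxy hx]
  rcases (mem_Ici.1 hx).eq_or_lt with rfl | hx₀
  · rw [doubleHalf_zero, doubleHalf_of_pos hy₀]
    positivity
  rw [doubleHalf_of_pos hx₀, doubleHalf_of_pos hy₀]
  gcongr
  norm_num

lemma doubleHalf_four_mul_sixteen_pow (n : ℕ) : doubleHalf (4 * 16 ^ n) = 2 * (4 * 16 ^ n) := by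
  have hlog : Int.log 16 ((16 : ℝ) ^ n) = n := by
    exact_mod_cast Int.log_zpow (R := ℝ) (b := 16) (by norm_num) n
  rw [doubleHalf_of_pos (by positivity), mul_div_cancel_left₀ _ four_ne_zero, hlog]
  simp only [zpow_natCast]
  ring

lemma doubleHalf_sixteen_pow (n : ℕ) : doubleHalf (16 ^ n) = 16 ^ n / 2 := by
  have hpos : (0 : ℝ) < 16 ^ n / 4 := by positivity
  have hlog : Int.log 16 ((16 : ℝ) ^ n / 4) = n - 1 := by
    refine le_antisymm ?_ ?_
    · have h : (16 : ℝ) ^ n / 4 < (16 : ℕ) ^ (n : ℤ) := by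
        rw [Nat.cast_ofNat, zpow_natCast]
        exact div_lt_self (by positivity) (by norm_num)
      have := (Int.lt_zpow_iff_log_lt (by norm_num) hpos).1 h
      omega
    · refine (Int.zpow_le_iff_le_log (b := 16) (by norm_num) hpos).1 ?_
      rw [zpow_sub₀ (by norm_num)]
      simp only [Nat.cast_ofNat, zpow_natCast, zpow_one]
      linarith
  rw [doubleHalf_of_pos (by positivity), hlog, zpow_sub₀ (by norm_num)]
  simp only [zpow_natCast, zpow_one]
  ring

lemma comp_indicator_add_indicator {α β : Type*} [AddZeroClass β] {φ : β → β} (hφ : φ 0 = 0)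
    {C₁ C₂ : Set α} (hC : Disjoint C₁ C₂) (u v : α → β) :
    φ ∘ (C₁.indicator u + C₂.indicator v) = C₁.indicator (φ ∘ u) + C₂.indicator (φ ∘ v) := by
  ext ω
  by_cases h₁ : ω ∈ C₁
  · simp [h₁, hC.notMem_of_mem_left h₁]
  · by_cases h₂ : ω ∈ C₂ <;> simp [h₁, h₂, hφ]

lemma ite_nonneg_mul_abs_div (x : ℝ) {c : ℝ} (hc : 0 < c) :
    (if 0 ≤ x then c else -c) * (|x| / c) = x := by
  split_ifs with hx
  · rw [abs_of_nonneg hx]; field_simp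
  · rw [abs_of_neg (not_le.1 hx)]; field_simp

lemma exists_measurable_le_sixteen_pow {Ω : Type*} {m : MeasurableSpace Ω} {r : Ω → ℝ}
    (hr : Measurable[m] r) : ∃ n : Ω → ℕ, Measurable[m] n ∧ ∀ ω, r ω ≤ 16 ^ n ω :=
  ⟨fun ω => ⌈r ω⌉₊, Nat.measurable_ceil.comp hr, fun ω => (Nat.le_ceil _).trans
    (by exact_mod_cast (Nat.lt_pow_self (by norm_num)).le)⟩

section Representation

variable {Ω : Type*} {m : MeasurableSpace Ω} [mΩ : MeasurableSpace Ω] {μ : Measure Ω}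
  [IsFiniteMeasure μ]

lemma condExp_indicator_add_indicator (hm : m ≤ mΩ) {C₁ C₂ : Set Ω} (hC₁ : MeasurableSet C₁)
    (hC₂ : MeasurableSet C₂) {c₁ c₂ : Ω → ℝ} (hc₁ : StronglyMeasurable[m] c₁)
    (hc₂ : StronglyMeasurable[m] c₂) (h₁ : Integrable (c₁ * condIndicator m μ C₁) μ)
    (h₂ : Integrable (c₂ * condIndicator m μ C₂) μ) :
    μ[C₁.indicator c₁ + C₂.indicator c₂ | m] =ᵐ[μ]
      c₁ * condIndicator m μ C₁ + c₂ * condIndicator m μ C₂ :=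
  (condExp_add (integrable_indicator_of_integrable_mul_condIndicator hm hC₁ hc₁ h₁)
    (integrable_indicator_of_integrable_mul_condIndicator hm hC₂ hc₂ h₂) m).trans
    ((condExp_indicator_eq_mul_condIndicator hm hC₁ hc₁ h₁).add
      (condExp_indicator_eq_mul_condIndicator hm hC₂ hc₂ h₂))

lemma integrable_and_condExp_indicator_smul_add_indicator_smul (hm : m ≤ mΩ) {C₁ C₂ : Set Ω}
    (hC₁ : MeasurableSet C₁) (hC₂ : MeasurableSet C₂) {u v a b : Ω → ℝ} (hu : Measurable[m] u)
    (hv : Measurable[m] v) (hua : u * condIndicator m μ C₁ =ᵐ[μ] a)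
    (hvb : v * condIndicator m μ C₂ =ᵐ[μ] b) (ha : Integrable a μ) (hb : Integrable b μ)
    (s t : ℝ) :
    Integrable (C₁.indicator (s • u) + C₂.indicator (t • v)) μ ∧
      μ[C₁.indicator (s • u) + C₂.indicator (t • v) | m] =ᵐ[μ] s • a + t • b := by
  have hsu : StronglyMeasurable[m] (s • u) := (hu.const_smul s).stronglyMeasurable
  have htv : StronglyMeasurable[m] (t • v) := (hv.const_smul t).stronglyMeasurable
  have h₁ : s • u * condIndicator m μ C₁ =ᵐ[μ] s • a := by
    filter_upwards [hua] with ω h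
    simp only [Pi.mul_apply, Pi.smul_apply, smul_eq_mul, mul_assoc, ← h]
  have h₂ : t • v * condIndicator m μ C₂ =ᵐ[μ] t • b := by
    filter_upwards [hvb] with ω h
    simp only [Pi.mul_apply, Pi.smul_apply, smul_eq_mul, mul_assoc, ← h]
  have hi₁ := (ha.smul s).congr h₁.symm
  have hi₂ := (hb.smul t).congr h₂.symm
  exact ⟨(integrable_indicator_of_integrable_mul_condIndicator hm hC₁ hsu hi₁).add
    (integrable_indicator_of_integrable_mul_condIndicator hm hC₂ htv hi₂),
    (condExp_indicator_add_indicator hm hC₁ hC₂ hsu htv hi₁ hi₂).trans (h₁.add h₂)⟩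

theorem CondAtomless.exists_condExp_eq_add_and_condExp_doubleHalf_eq (hm : m ≤ mΩ)
    (hat : CondAtomless m μ) {a b : Ω → ℝ} (ha : Measurable[m] a) (hb : Measurable[m] b)
    (hai : Integrable a μ) (hbi : Integrable b μ) :
    ∃ ζ : Ω → ℝ, Measurable ζ ∧ Integrable ζ μ ∧ Integrable (doubleHalf ∘ ζ) μ ∧
      μ[ζ | m] =ᵐ[μ] a + b ∧ μ[doubleHalf ∘ ζ | m] =ᵐ[μ] (2 : ℝ) • a + (1 / 2 : ℝ) • b := by
  obtain ⟨n, hn, hab⟩ := exists_measurable_le_sixteen_pow (r := fun ω => |a ω| + |b ω|)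
    ((measurable_abs.comp ha).add (measurable_abs.comp hb))
  set q : Ω → ℝ := fun ω => 16 ^ n ω
  have hq : Measurable[m] q := (measurable_from_top (f := fun k : ℕ => (16 : ℝ) ^ k)).comp hn
  have hq₀ : ∀ ω, 0 < q ω := fun ω => by positivity
  set u : Ω → ℝ := fun ω => if 0 ≤ a ω then 4 * q ω else -(4 * q ω)
  set v : Ω → ℝ := fun ω => if 0 ≤ b ω then q ω else -q ω
  have hu : Measurable[m] u :=
    Measurable.ite (measurableSet_le measurable_const ha) (hq.const_mul 4) (hq.const_mul 4).neg
  have hv : Measurable[m] v := Measurable.ite (measurableSet_le measurable_const hb) hq hq.neg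
  obtain ⟨C₁, C₂, hC₁, hC₂, hC, hw₁, hw₂⟩ := exists_disjoint_condIndicator_eq hm hat
    (w₁ := fun ω => |a ω| / (4 * q ω)) (w₂ := fun ω => |b ω| / q ω)
    ((measurable_abs.comp ha).div (hq.const_mul 4)) ((measurable_abs.comp hb).div hq)
    (fun ω => by positivity) (fun ω => by positivity) fun ω => by
      have := hq₀ ω
      rw [div_add_div _ _ (by positivity) this.ne', div_le_one (by positivity)]
      nlinarith [hab ω, abs_nonneg (a ω), abs_nonneg (b ω)]
  have hua : u * condIndicator m μ C₁ =ᵐ[μ] a := by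
    filter_upwards [hw₁] with ω h
    rw [Pi.mul_apply, h, ite_nonneg_mul_abs_div _ (by positivity)]
  have hvb : v * condIndicator m μ C₂ =ᵐ[μ] b := by
    filter_upwards [hw₂] with ω h
    rw [Pi.mul_apply, h, ite_nonneg_mul_abs_div _ (hq₀ ω)]
  have key := integrable_and_condExp_indicator_smul_add_indicator_smul hm hC₁ hC₂ hu hv hua hvb
    hai hbi
  have hφ : doubleHalf ∘ (C₁.indicator u + C₂.indicator v) =
      C₁.indicator ((2 : ℝ) • u) + C₂.indicator ((1 / 2 : ℝ) • v) := by
    rw [comp_indicator_add_indicator doubleHalf_zero hC]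
    congr 2 <;> ext ω
    · simp only [Function.comp, u, Pi.smul_apply, smul_eq_mul]
      split_ifs <;> simp [doubleHalf_neg, doubleHalf_four_mul_sixteen_pow, q]
    · simp only [Function.comp, v, Pi.smul_apply, smul_eq_mul]
      split_ifs <;> simp only [doubleHalf_neg, doubleHalf_sixteen_pow, q] <;> ring
  refine ⟨C₁.indicator u + C₂.indicator v,
    ((hu.mono hm le_rfl).indicator hC₁).add ((hv.mono hm le_rfl).indicator hC₂),
    by simpa using (key 1 1).1, hφ ▸ (key 2 (1 / 2)).1, by simpa using (key 1 1).2,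
    hφ ▸ (key 2 (1 / 2)).2⟩

end Representation

theorem commonotone_condexp_representation {Ω : Type*} (m1 : MeasurableSpace Ω)
    [m2 : MeasurableSpace Ω] (hm : m1 ≤ m2) (μ : Measure Ω) [IsProbabilityMeasure μ]
    (hatomless : CondAtomless m1 μ)
    (f g : Ω → ℝ) (hfm : Measurable[m1] f) (hgm : Measurable[m1] g)
    (hfi : Integrable f μ) (hgi : Integrable g μ) :
    ∃ ξ η : Ω → ℝ, Measurable ξ ∧ Measurable η ∧ Integrable ξ μ ∧ Integrable η μ ∧
      Commonotone μ ξ η ∧ μ[ξ | m1] =ᵐ[μ] f ∧ μ[η | m1] =ᵐ[μ] g := by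
  -- `f = a + b` and `g = 2 a + b / 2`
  obtain ⟨ζ, hζ, hζi, hηi, hζf, hηg⟩ :=
    hatomless.exists_condExp_eq_add_and_condExp_doubleHalf_eq hm
      (a := fun ω => (2 * g ω - f ω) / 3) (b := fun ω => (4 * f ω - 2 * g ω) / 3)
      (((hgm.const_mul 2).sub hfm).div_const 3)
      (((hfm.const_mul 4).sub (hgm.const_mul 2)).div_const 3)
      (((hgi.const_mul 2).sub hfi).div_const 3)
      (((hfi.const_mul 4).sub (hgi.const_mul 2)).div_const 3)
  refine ⟨ζ, doubleHalf ∘ ζ, hζ, monotone_doubleHalf.measurable.comp hζ, hζi, hηi,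
    ⟨id, doubleHalf, ζ, monotone_id, monotone_doubleHalf, hζ, .rfl, .rfl⟩, ?_, ?_⟩
  · filter_upwards [hζf] with ω h
    rw [h, Pi.add_apply]
    ring
  · filter_upwards [hηg] with ω h
    simp only [h, Pi.add_apply, Pi.smul_apply, smul_eq_mul]
    ring
end

section
/- Let (Ω, ℱ, P) be a probability space and suppose there exists an ℱ-measurable random variable U : Ω → [0,1], uniformly distributed on [0,1] and independent of a sub-σ-algebra ℱ₁ ⊆ ℱ, such that for every ℱ₁-measurable h : Ω → [0,1] one has E[1_{{U ≤ h}} ∣ ℱ₁] = h almost surely. Then ℱ is atomless conditionally to ℱ₁. -/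
open MeasureTheory ProbabilityTheory

/-!
Cut a measurable set `A` along the levels `{U ≤ q}`, `q` rational, and put
`p_q = E[1_{A ∩ {U ≤ q}} ∣ ℱ₁]`, `h = E[1_A ∣ ℱ₁]`. Since `E[1_{U ≤ q} ∣ ℱ₁] = q`, almost surely
`p_q ≤ q`, `h - p_q ≤ 1 - q` and `p_{q'} - p_q ≤ q' - q` for all rationals `0 ≤ q ≤ q' ≤ 1`.
A function with these three properties cannot jump from `0` to `h > 0`, so on `{h > 0}` some `q`
has `0 < p_q < h`. The set `{0 < p_q < h}` is `ℱ₁`-measurable, so the pieces `A ∩ {U ≤ q}` can be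
glued along a disjoint `ℱ₁`-measurable partition into a single set `B ⊆ A`.
-/

lemma exists_rat_pos_lt_of_le_of_sub_le (p : ℚ → ℝ) {h : ℝ} (hpos : 0 < h)
    (hle : ∀ q : ℚ, 0 ≤ q → q ≤ 1 → p q ≤ q)
    (hge : ∀ q : ℚ, 0 ≤ q → q ≤ 1 → h - p q ≤ 1 - q)
    (hlip : ∀ q q' : ℚ, 0 ≤ q → q ≤ q' → q' ≤ 1 → p q' - p q ≤ q' - q) :
    ∃ q : ℚ, 0 < p q ∧ p q < h := by
  by_contra! hjump
  -- `c` is the last level at which `p` still vanishes; just above it `p` would have to jump to `h`.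
  set Z : Set ℝ := (↑) '' {q : ℚ | 0 ≤ q ∧ q ≤ 1 ∧ p q ≤ 0}
  have hZ0 : (0 : ℝ) ∈ Z := ⟨0, ⟨le_rfl, zero_le_one, by simpa using hle 0 le_rfl zero_le_one⟩,
    Rat.cast_zero⟩
  have hZbdd : BddAbove Z := ⟨1, by rintro _ ⟨q, ⟨-, hq1, -⟩, rfl⟩; exact_mod_cast hq1⟩
  set c := sSup Z
  have hc0 : 0 ≤ c := le_csSup hZbdd hZ0
  have hc1 : c ≤ 1 - h := csSup_le ⟨0, hZ0⟩ <| by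
    rintro _ ⟨q, ⟨hq0, hq1, hpq⟩, rfl⟩
    linarith [hge q hq0 hq1]
  obtain ⟨_, ⟨r, ⟨hr0, hr1, hpr⟩, rfl⟩, hrc⟩ :=
    exists_lt_of_lt_csSup ⟨0, hZ0⟩ (by linarith : c - h / 3 < c)
  obtain ⟨r', hcr', hr'c⟩ := exists_rat_btwn (by linarith : c < c + h / 3)
  have hr'0 : 0 ≤ r' := by exact_mod_cast hc0.trans hcr'.le
  have hr'1 : r' ≤ 1 := by exact_mod_cast (by linarith : (r' : ℝ) ≤ 1)
  have hrr' : r ≤ r' := by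
    have hrc' : (r : ℝ) ≤ c := le_csSup hZbdd ⟨r, ⟨hr0, hr1, hpr⟩, rfl⟩
    exact_mod_cast hrc'.trans hcr'.le
  have hpr' : 0 < p r' := by
    by_contra! hpr'
    exact (le_csSup hZbdd ⟨r', ⟨hr'0, hr'1, hpr'⟩, rfl⟩).not_gt hcr'
  linarith [hjump r' hpr', hlip r r' hr0 hrr' hr'1]

section CondIndicator

variable {Ω : Type*} {m1 : MeasurableSpace Ω} [mF : MeasurableSpace Ω] {μ : Measure Ω}
  [IsFiniteMeasure μ]

lemma condIndicator_mono {s t : Set Ω} (hs : MeasurableSet s) (ht : MeasurableSet t)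
    (hst : s ⊆ t) : condIndicator m1 μ s ≤ᵐ[μ] condIndicator m1 μ t :=
  condExp_mono ((integrable_const 1).indicator hs) ((integrable_const 1).indicator ht)
    (.of_forall (Set.indicator_le_indicator_of_subset hst fun _ => zero_le_one))

lemma condIndicator_sdiff {s t : Set Ω} (hs : MeasurableSet s) (ht : MeasurableSet t)
    (hst : s ⊆ t) :
    condIndicator m1 μ (t \ s) =ᵐ[μ] condIndicator m1 μ t - condIndicator m1 μ s := by
  rw [condIndicator, Set.indicator_sdiff hst]
  exact condExp_sub ((integrable_const 1).indicator ht) ((integrable_const 1).indicator hs) m1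

lemma condIndicator_univ_s7 (hm : m1 ≤ mF) : condIndicator m1 μ Set.univ = 1 := by
  rw [condIndicator, Set.indicator_univ, condExp_const hm]
  rfl

lemma condIndicator_sub_le_sub {s t s' t' : Set Ω} (hs : MeasurableSet s) (ht : MeasurableSet t)
    (hs' : MeasurableSet s') (ht' : MeasurableSet t') (hst : s ⊆ t) (hst' : s' ⊆ t')
    (hdiff : t \ s ⊆ t' \ s') :
    ∀ᵐ ω ∂μ, condIndicator m1 μ t ω - condIndicator m1 μ s ω ≤
      condIndicator m1 μ t' ω - condIndicator m1 μ s' ω := by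
  filter_upwards [condIndicator_sdiff hs ht hst, condIndicator_sdiff hs' ht' hst',
    condIndicator_mono (ht.diff hs) (ht'.diff hs') hdiff] with ω h₁ h₂ h₃
  rwa [h₁, h₂] at h₃

lemma ae_exists_rat_condIndicator_inter_pos_lt (hm : m1 ≤ mF) {A : Set Ω}
    (hA : MeasurableSet A) {C : ℚ → Set Ω} (hCm : ∀ q, MeasurableSet (C q)) (hCmono : Monotone C)
    (hC : ∀ q : ℚ, 0 ≤ q → q ≤ 1 → condIndicator m1 μ (C q) =ᵐ[μ] fun _ => (q : ℝ)) :
    ∀ᵐ ω ∂μ, 0 < condIndicator m1 μ A ω → ∃ q : ℚ,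
      0 < condIndicator m1 μ (A ∩ C q) ω ∧
        condIndicator m1 μ (A ∩ C q) ω < condIndicator m1 μ A ω := by
  have hlevel : ∀ᵐ ω ∂μ, ∀ q : ℚ, 0 ≤ q → q ≤ 1 → condIndicator m1 μ (C q) ω = q :=
    ae_all_iff.2 fun q => by simp only [Filter.eventually_imp_distrib_left]; exact hC q
  have hle : ∀ᵐ ω ∂μ, ∀ q : ℚ,
      condIndicator m1 μ (A ∩ C q) ω ≤ condIndicator m1 μ (C q) ω :=
    ae_all_iff.2 fun q => condIndicator_mono (hA.inter (hCm q)) (hCm q) Set.inter_subset_right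
  have hge : ∀ᵐ ω ∂μ, ∀ q : ℚ, condIndicator m1 μ A ω - condIndicator m1 μ (A ∩ C q) ω ≤
      condIndicator m1 μ Set.univ ω - condIndicator m1 μ (C q) ω :=
    ae_all_iff.2 fun q => condIndicator_sub_le_sub (hA.inter (hCm q)) hA (hCm q)
      MeasurableSet.univ Set.inter_subset_left (Set.subset_univ _)
      fun ω hω => ⟨trivial, fun hωC => hω.2 ⟨hω.1, hωC⟩⟩
  have hlip : ∀ᵐ ω ∂μ, ∀ q q' : ℚ, q ≤ q' →
      condIndicator m1 μ (A ∩ C q') ω - condIndicator m1 μ (A ∩ C q) ω ≤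
        condIndicator m1 μ (C q') ω - condIndicator m1 μ (C q) ω := by
    refine ae_all_iff.2 fun q => ae_all_iff.2 fun q' => ?_
    rw [Filter.eventually_imp_distrib_left]
    intro hqq'
    exact condIndicator_sub_le_sub (hA.inter (hCm q)) (hA.inter (hCm q')) (hCm q) (hCm q')
      (Set.inter_subset_inter_right A (hCmono hqq')) (hCmono hqq')
      fun ω hω => ⟨hω.1.2, fun hωC => hω.2 ⟨hω.1.1, hωC⟩⟩
  filter_upwards [hlevel, hle, hge, hlip] with ω hlevel hle hge hlip hpos
  refine exists_rat_pos_lt_of_le_of_sub_le _ hpos (fun q hq0 hq1 => ?_) (fun q hq0 hq1 => ?_)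
    fun q q' hq0 hqq' hq'1 => ?_
  · simpa [hlevel q hq0 hq1] using hle q
  · simpa [hlevel q hq0 hq1, condIndicator_univ_s7 hm] using hge q
  · simpa [hlevel q hq0 (hqq'.trans hq'1), hlevel q' (hq0.trans hqq') hq'1] using hlip q q' hqq'

lemma condIndicator_iUnion_inter_ae_eq (hm : m1 ≤ mF) {ι : Type*} [Countable ι]
    {D T : ι → Set Ω} (hD : ∀ i, MeasurableSet (D i)) (hT : ∀ i, MeasurableSet[m1] (T i))
    (hdisj : Pairwise (Function.onFun Disjoint T)) (i : ι) :
    ∀ᵐ ω ∂μ, ω ∈ T i →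
      condIndicator m1 μ (⋃ j, D j ∩ T j) ω = condIndicator m1 μ (D i) ω := by
  set B := ⋃ j, D j ∩ T j
  have hB : MeasurableSet B := .iUnion fun j => (hD j).inter (hm _ (hT j))
  have hTB : T i ∩ B = T i ∩ D i := by
    ext ω
    simp only [B, Set.mem_inter_iff, Set.mem_iUnion]
    refine ⟨fun ⟨hωT, j, hωD, hωTj⟩ => ⟨hωT, ?_⟩, fun ⟨hωT, hωD⟩ => ⟨hωT, i, hωD, hωT⟩⟩
    obtain rfl : j = i := by_contra fun hji => Set.disjoint_left.1 (hdisj hji) hωTj hωT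
    exact hωD
  have hTi : (T i).indicator (condIndicator m1 μ B) =ᵐ[μ]
      (T i).indicator (condIndicator m1 μ (D i)) :=
    calc (T i).indicator (condIndicator m1 μ B)
        =ᵐ[μ] μ[(T i).indicator (B.indicator fun _ => (1 : ℝ)) | m1] :=
          (condExp_indicator ((integrable_const 1).indicator hB) (hT i)).symm
      _ = μ[(T i).indicator ((D i).indicator fun _ => (1 : ℝ)) | m1] := by
          rw [Set.indicator_indicator, Set.indicator_indicator, hTB]
      _ =ᵐ[μ] (T i).indicator (condIndicator m1 μ (D i)) :=
          condExp_indicator ((integrable_const 1).indicator (hD i)) (hT i)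
  filter_upwards [hTi] with ω hω hωT
  simpa only [Set.indicator_of_mem hωT] using hω

lemma exists_condIndicator_eq_on_iUnion (hm : m1 ≤ mF) {D S : ℕ → Set Ω}
    (hD : ∀ n, MeasurableSet (D n)) (hS : ∀ n, MeasurableSet[m1] (S n)) :
    ∃ B, MeasurableSet B ∧ B ⊆ ⋃ n, D n ∧ ∀ᵐ ω ∂μ, ∀ n, ω ∈ S n →
      ∃ k, ω ∈ S k ∧ condIndicator m1 μ B ω = condIndicator m1 μ (D k) ω := by
  refine ⟨⋃ n, D n ∩ disjointed S n, .iUnion fun n => (hD n).inter (hm _ (.disjointed hS n)),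
    Set.iUnion_mono fun n => Set.inter_subset_left, ?_⟩
  filter_upwards [ae_all_iff.2 (condIndicator_iUnion_inter_ae_eq hm hD (.disjointed hS)
    (disjoint_disjointed S))] with ω hglue n hωS
  obtain ⟨k, hωk⟩ := Set.mem_iUnion.1 (iUnion_disjointed (f := S) ▸ Set.mem_iUnion.2 ⟨n, hωS⟩)
  exact ⟨k, disjointed_subset S k hωk, hglue k hωk⟩

end CondIndicator

theorem condAtomless_of_uniform_section_general {Ω : Type*} (m1 : MeasurableSpace Ω)
    [mF : MeasurableSpace Ω] (hm : m1 ≤ mF) (μ : Measure Ω) [IsProbabilityMeasure μ]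
    (U : Ω → ℝ) (hU : Measurable U)
    (hUsection : ∀ h : Ω → ℝ, Measurable[m1] h → (∀ ω, h ω ∈ Set.Icc (0 : ℝ) 1) →
      condIndicator m1 μ {ω | U ω ≤ h ω} =ᵐ[μ] h) :
    CondAtomless m1 μ := by
  intro A hA
  set C : ℚ → Set Ω := fun q => {ω | U ω ≤ q}
  have hCm : ∀ q, MeasurableSet (C q) := fun q => hU measurableSet_Iic
  have hCmono : Monotone C := fun q q' hqq' ω (hω : U ω ≤ q) =>
    hω.trans (Rat.cast_le.2 hqq')
  have hsplit := ae_exists_rat_condIndicator_inter_pos_lt hm hA hCm hCmono fun q hq0 hq1 =>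
    hUsection _ measurable_const fun _ => ⟨by exact_mod_cast hq0, by exact_mod_cast hq1⟩
  have hmeas : ∀ s, Measurable[m1] (condIndicator m1 μ s) :=
    fun s => stronglyMeasurable_condExp.measurable
  obtain ⟨e, he⟩ := exists_surjective_nat ℚ
  obtain ⟨B, hB, hBA, hBeq⟩ := exists_condIndicator_eq_on_iUnion (μ := μ) hm
    (D := fun n => A ∩ C (e n)) (fun n => hA.inter (hCm _))
    (S := fun n => {ω | 0 < condIndicator m1 μ (A ∩ C (e n)) ω ∧
      condIndicator m1 μ (A ∩ C (e n)) ω < condIndicator m1 μ A ω})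
    fun n => (measurableSet_lt measurable_const (hmeas _)).inter
      (measurableSet_lt (hmeas _) (hmeas _))
  refine ⟨B, hB, hBA.trans (Set.iUnion_subset fun _ => Set.inter_subset_left), ?_⟩
  filter_upwards [hsplit, hBeq] with ω hsplit hBeq hpos
  obtain ⟨q, hq⟩ := hsplit hpos
  obtain ⟨n, rfl⟩ := he q
  obtain ⟨k, hk, hBk⟩ := hBeq n hq
  exact hBk ▸ hk

theorem condAtomless_of_uniform_section {Ω : Type*} (m1 : MeasurableSpace Ω)
    [mF : MeasurableSpace Ω] (hm : m1 ≤ mF) (μ : Measure Ω) [IsProbabilityMeasure μ]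
    (U : Ω → ℝ) (hU : Measurable U) (hU01 : ∀ ω, U ω ∈ Set.Icc (0 : ℝ) 1)
    (hUlaw : μ.map U = (volume : Measure ℝ).restrict (Set.Icc 0 1))
    (hUindep : @Indep Ω (MeasurableSpace.comap U inferInstance) m1 mF μ)
    (hUsection : ∀ h : Ω → ℝ, Measurable[m1] h → (∀ ω, h ω ∈ Set.Icc (0 : ℝ) 1) →
      condIndicator m1 μ {ω | U ω ≤ h ω} =ᵐ[μ] h) :
    CondAtomless m1 μ :=
  condAtomless_of_uniform_section_general m1 (mF := mF) hm μ U hU hUsection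
end

section
/- Let (Ω, ℱ₂, P) be a probability space with sub-σ-algebra ℱ₁ ⊆ ℱ₂ and suppose there exists an atomless sub-σ-algebra ℬ ⊆ ℱ₂ independent of ℱ₁. Then there exists an ℱ₂-measurable random variable U : Ω → [0,1], uniformly distributed on [0,1] and independent of ℱ₁. -/
open MeasureTheory ProbabilityTheory

/-- A sub-σ-algebra `mB` is atomless for `μ` if every `mB`-measurable set of positive
measure contains an `mB`-measurable subset of strictly smaller positive measure. -/
def SigmaAlgebraAtomless {Ω : Type*} (mB : MeasurableSpace Ω) [MeasurableSpace Ω]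
    (μ : Measure Ω) : Prop :=
  ∀ A : Set Ω, MeasurableSet[mB] A → 0 < μ A →
    ∃ B : Set Ω, MeasurableSet[mB] B ∧ B ⊆ A ∧ 0 < μ B ∧ μ B < μ A

open Set Filter
open scoped ENNReal Topology

/-!
Since `ℬ` is independent of `ℱ₁`, every `ℬ`-measurable variable is independent of `ℱ₁`, so it
suffices to build a uniform `ℬ`-measurable variable. Atomlessness splits every `ℬ`-set `A` into two
`ℬ`-sets of measure at most `3/4 · P(A)`: if no subset of `A` had measure in `(r, 2r]`, the subsets
of measure `≤ r` would be closed under countable unions, and adding a small positive piece to a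
largest one would give a contradiction. Iterating the split codes each point by a branch in
`{0,1}^ℕ`; the points sharing a branch lie in cells of measure `≤ (3/4)^n` for every `n`, so the
code has an atomless law. Embedding `{0,1}^ℕ` into `ℝ` gives a variable `X` with continuous
distribution function `F`, and `F ∘ X` is uniform on `[0,1]`.
-/

lemma exists_mem_forall_measure_le_of_iUnion_mem {Ω : Type*} [MeasurableSpace Ω]
    (μ : Measure Ω) {𝒮 : Set (Set Ω)} (hne : 𝒮.Nonempty)
    (hunion : ∀ B ∈ 𝒮, ∀ C ∈ 𝒮, B ∪ C ∈ 𝒮)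
    (hiUnion : ∀ f : ℕ → Set Ω, Monotone f → (∀ n, f n ∈ 𝒮) → ⋃ n, f n ∈ 𝒮) :
    ∃ C ∈ 𝒮, ∀ B ∈ 𝒮, μ B ≤ μ C := by
  obtain ⟨u, -, hu_lim, hu_mem⟩ :=
    exists_seq_tendsto_sSup (hne.image μ) (OrderTop.bddAbove _)
  choose B hB𝒮 hBu using hu_mem
  have hacc : ∀ n, accumulate B n ∈ 𝒮 := by
    intro n
    induction n with
    | zero => simpa using hB𝒮 0
    | succ n ih => simpa only [accumulate_succ] using hunion _ ih _ (hB𝒮 _)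
  refine ⟨⋃ n, accumulate B n, hiUnion _ monotone_accumulate hacc, fun D hD => ?_⟩
  calc μ D ≤ sSup (μ '' 𝒮) := le_sSup (mem_image_of_mem μ hD)
    _ ≤ μ (⋃ n, accumulate B n) := by
      refine le_of_tendsto' hu_lim fun n => ?_
      rw [← hBu n, iUnion_accumulate]
      exact measure_mono (subset_iUnion B n)

structure IsBisection {Ω : Type*} [MeasurableSpace Ω] (μ : Measure Ω) (c : ℝ)
    (bis : Set Ω → Set Ω) : Prop where
  measurableSet : ∀ A, MeasurableSet A → MeasurableSet (bis A)
  measureReal_inter_le : ∀ A, MeasurableSet A → μ.real (A ∩ bis A) ≤ c * μ.real A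
  measureReal_sdiff_le : ∀ A, MeasurableSet A → μ.real (A \ bis A) ≤ c * μ.real A

namespace Bisection

variable {Ω : Type*} (bis : Set Ω → Set Ω)

def cell : List Bool → Set Ω
  | [] => univ
  | true :: s => cell s ∩ bis (cell s)
  | false :: s => cell s \ bis (cell s)

open scoped Classical in
noncomputable def address (ω : Ω) : ℕ → List Bool
  | 0 => []
  | n + 1 => decide (ω ∈ bis (cell bis (address ω n))) :: address ω n

open scoped Classical in
noncomputable def code (ω : Ω) (n : ℕ) : Bool :=
  decide (ω ∈ bis (cell bis (address bis ω n)))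

variable {bis}

lemma address_succ (ω : Ω) (n : ℕ) : address bis ω (n + 1) = code bis ω n :: address bis ω n :=
  rfl

lemma length_address (ω : Ω) (n : ℕ) : (address bis ω n).length = n := by
  induction n with
  | zero => rfl
  | succ n ih => rw [address_succ, List.length_cons, ih]

lemma cell_cons_subset (b : Bool) (s : List Bool) : cell bis (b :: s) ⊆ cell bis s := by
  cases b
  · exact sdiff_subset
  · exact inter_subset_left

lemma mem_cell_address (ω : Ω) (n : ℕ) : ω ∈ cell bis (address bis ω n) := by
  induction n with
  | zero => exact mem_univ ω
  | succ n ih =>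
    by_cases h : ω ∈ bis (cell bis (address bis ω n))
    · simpa [address_succ, code, h, cell] using And.intro ih h
    · simpa [address_succ, code, h, cell] using ih

lemma address_length_eq_of_mem_cell {ω : Ω} {s : List Bool} (h : ω ∈ cell bis s) :
    address bis ω s.length = s := by
  induction s with
  | nil => rfl
  | cons b s ih =>
    rw [List.length_cons, address_succ, ih (cell_cons_subset b s h)]
    cases b <;> simp_all [code, cell]

lemma address_eq_of_code_eq {ω ω' : Ω} (h : code bis ω = code bis ω') :
    address bis ω = address bis ω' := by
  funext n
  induction n with
  | zero => rfl
  | succ n ih => rw [address_succ, address_succ, ih, h]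

variable [MeasurableSpace Ω] {μ : Measure Ω} {c : ℝ}

lemma measurableSet_cell (hbis : ∀ A, MeasurableSet A → MeasurableSet (bis A)) :
    ∀ s : List Bool, MeasurableSet (cell bis s)
  | [] => .univ
  | true :: s => (measurableSet_cell hbis s).inter (hbis _ (measurableSet_cell hbis s))
  | false :: s => (measurableSet_cell hbis s).diff (hbis _ (measurableSet_cell hbis s))

lemma measurable_code (hbis : ∀ A, MeasurableSet A → MeasurableSet (bis A)) :
    Measurable (code bis) := by
  refine measurable_pi_iff.mpr fun n => measurable_to_bool ?_
  have hcells : (code bis · n) ⁻¹' {true} =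
      ⋃ s : List Bool, (cell bis s ∩ {_ω | s.length = n}) ∩ bis (cell bis s) := by
    ext ω
    simp only [mem_preimage, mem_singleton_iff, code, decide_eq_true_eq, mem_iUnion,
      mem_inter_iff, mem_ofPred_eq]
    constructor
    · exact fun h => ⟨_, ⟨mem_cell_address ω n, length_address ω n⟩, h⟩
    · rintro ⟨s, ⟨hs, rfl⟩, h⟩
      rwa [address_length_eq_of_mem_cell hs]
  rw [hcells]
  exact .iUnion fun s => ((measurableSet_cell hbis s).inter (.const _)).inter
    (hbis _ (measurableSet_cell hbis s))

lemma measureReal_cell_le (hμ : IsBisection μ c bis) (hc : 0 ≤ c) :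
    ∀ s : List Bool, μ.real (cell bis s) ≤ c ^ s.length * μ.real univ
  | [] => by simp [cell]
  | b :: s => by
    have hs := measureReal_cell_le hμ hc s
    have hstep : μ.real (cell bis (b :: s)) ≤ c * μ.real (cell bis s) := by
      cases b
      · exact hμ.measureReal_sdiff_le _ (measurableSet_cell hμ.measurableSet s)
      · exact hμ.measureReal_inter_le _ (measurableSet_cell hμ.measurableSet s)
    calc μ.real (cell bis (b :: s)) ≤ c * (c ^ s.length * μ.real univ) :=
          hstep.trans (mul_le_mul_of_nonneg_left hs hc)
      _ = c ^ (b :: s).length * μ.real univ := by rw [List.length_cons, pow_succ']; ring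

lemma measure_preimage_code_singleton [IsFiniteMeasure μ] (hμ : IsBisection μ c bis)
    (hc0 : 0 ≤ c) (hc1 : c < 1) (x : ℕ → Bool) : μ (code bis ⁻¹' {x}) = 0 := by
  rcases eq_empty_or_nonempty (code bis ⁻¹' {x}) with hempty | ⟨ω₀, hω₀⟩
  · rw [hempty, measure_empty]
  have hsub : ∀ n, code bis ⁻¹' {x} ⊆ cell bis (address bis ω₀ n) := fun n ω hω => by
    rw [← address_eq_of_code_eq (hω.trans hω₀.symm)]
    exact mem_cell_address ω n
  have hle : ∀ n, μ.real (code bis ⁻¹' {x}) ≤ c ^ n * μ.real univ := fun n =>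
    (measureReal_mono (hsub n)).trans
      ((measureReal_cell_le hμ hc0 _).trans_eq (by rw [length_address]))
  have hlim : Tendsto (fun n => c ^ n * μ.real univ) atTop (𝓝 0) := by
    simpa using (tendsto_pow_atTop_nhds_zero_of_lt_one hc0 hc1).mul_const (μ.real univ)
  exact (measureReal_eq_zero_iff).mp (le_antisymm (ge_of_tendsto' hlim hle) measureReal_nonneg)

end Bisection

lemma Monotone.exists_eq_and_preimage_Iic_eq_Iic {F : ℝ → ℝ} (hF : Monotone F)
    (hc : Continuous F) {t : ℝ} (hne : (F ⁻¹' Iic t).Nonempty) (hlt : ∃ x, t < F x) :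
    ∃ a, F a = t ∧ F ⁻¹' Iic t = Iic a := by
  obtain ⟨y, hy⟩ := hlt
  have hbdd : BddAbove (F ⁻¹' Iic t) :=
    ⟨y, fun x (hx : F x ≤ t) => (hF.reflect_lt (hx.trans_lt hy)).le⟩
  set a := sSup (F ⁻¹' Iic t)
  have ha : F a ≤ t := (isClosed_Iic.preimage hc).csSup_mem hne hbdd
  refine ⟨a, le_antisymm ha ?_,
    ext fun x => ⟨fun hx => le_csSup hbdd hx, fun hx => (hF hx).trans ha⟩⟩
  obtain ⟨z, hz, hFz⟩ :=
    intermediate_value_Icc (hF.reflect_lt (ha.trans_lt hy)).le hc.continuousOn ⟨ha, hy.le⟩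
  have hza : z ≤ a := le_csSup hbdd (show F z ≤ t from hFz.le)
  rw [← le_antisymm hza hz.1, hFz]

lemma continuous_cdf (ν : Measure ℝ) [IsProbabilityMeasure ν] [NullSingletonClass ν] :
    Continuous (cdf ν) := by
  refine continuous_iff_continuousAt.mpr fun x =>
    (monotone_cdf ν).continuousAt_iff_leftLim_eq_rightLim.mpr ?_
  rw [(cdf ν).rightLim_eq]
  have hjump := (cdf ν).measure_singleton x
  rw [measure_cdf, measure_singleton, eq_comm, ENNReal.ofReal_eq_zero] at hjump
  linarith [(monotone_cdf ν).leftLim_le (le_refl x)]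

lemma map_cdf_eq_volume_restrict (ν : Measure ℝ) [IsProbabilityMeasure ν]
    [NullSingletonClass ν] :
    ν.map (cdf ν) = volume.restrict (Icc 0 1) := by
  have hF := monotone_cdf ν
  have : IsProbabilityMeasure (ν.map (cdf ν)) :=
    Measure.isProbabilityMeasure_map hF.measurable.aemeasurable
  refine Measure.ext_of_Iic _ _ fun t => ?_
  have hIcc : Iic t ∩ Icc 0 1 = Icc 0 (min t 1) := by
    ext x
    simp only [mem_inter_iff, mem_Iic, mem_Icc, le_min_iff]
    tauto
  rw [Measure.map_apply hF.measurable measurableSet_Iic, Measure.restrict_apply measurableSet_Iic,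
    hIcc, Real.volume_Icc, sub_zero]
  rcases lt_or_ge t 0 with ht0 | ht0
  · have hempty : cdf ν ⁻¹' Iic t = ∅ :=
      eq_empty_of_forall_notMem fun x (hx : cdf ν x ≤ t) =>
        (hx.trans_lt ht0).not_ge (cdf_nonneg ν x)
    rw [hempty, measure_empty, ENNReal.ofReal_of_nonpos (by linarith [min_le_left t 1])]
  rcases le_or_gt 1 t with ht1 | ht1
  · have huniv : cdf ν ⁻¹' Iic t = univ := eq_univ_of_forall fun x => (cdf_le_one ν x).trans ht1
    rw [huniv, measure_univ, min_eq_right ht1, ENNReal.ofReal_one]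
  rw [min_eq_left ht1.le]
  rcases eq_empty_or_nonempty (cdf ν ⁻¹' Iic t) with hempty | hne
  · have ht : t = 0 := by
      refine le_antisymm (not_lt.mp fun htpos => ?_) ht0
      obtain ⟨x, hx⟩ := ((tendsto_cdf_atBot ν).eventually_lt_const htpos).exists
      exact (hempty ▸ hx.le : x ∈ (∅ : Set ℝ))
    rw [hempty, measure_empty, ht, ENNReal.ofReal_zero]
  obtain ⟨a, hat, hIic⟩ := hF.exists_eq_and_preimage_Iic_eq_Iic (continuous_cdf ν) hne
    ((tendsto_cdf_atTop ν).eventually_const_lt ht1).exists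
  rw [hIic, ← ofReal_cdf, hat]

section Atomless

variable {Ω : Type*} {m : MeasurableSpace Ω} {μ : Measure Ω} [IsFiniteMeasure μ]

lemma SigmaAlgebraAtomless.exists_subset_measure_pos_le_half (hμ : SigmaAlgebraAtomless m μ)
    {A : Set Ω} (hA : MeasurableSet A) (hA0 : 0 < μ A) :
    ∃ B ⊆ A, MeasurableSet B ∧ 0 < μ B ∧ μ B ≤ μ A / 2 := by
  obtain ⟨B, hB, hBA, hB0, hBA'⟩ := hμ A hA hA0
  have hdiff : μ (A \ B) = μ A - μ B :=
    measure_sdiff hBA hB.nullMeasurableSet (measure_ne_top μ B)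
  by_cases hhalf : μ B ≤ μ A / 2
  · exact ⟨B, hBA, hB, hB0, hhalf⟩
  refine ⟨A \ B, sdiff_subset, hA.diff hB, by rwa [hdiff, tsub_pos_iff_lt], ?_⟩
  rw [hdiff, tsub_le_iff_right]
  calc μ A = μ A / 2 + μ A / 2 := (ENNReal.add_halves _).symm
    _ ≤ μ A / 2 + μ B := by gcongr; exact (not_le.mp hhalf).le

lemma SigmaAlgebraAtomless.exists_subset_measure_pos_le (hμ : SigmaAlgebraAtomless m μ)
    {A : Set Ω} (hA : MeasurableSet A) (hA0 : 0 < μ A) {ε : ℝ≥0∞} (hε : ε ≠ 0) :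
    ∃ B ⊆ A, MeasurableSet B ∧ 0 < μ B ∧ μ B ≤ ε := by
  have hpow : ∀ n : ℕ, ∃ B ⊆ A, MeasurableSet B ∧ 0 < μ B ∧ μ B ≤ μ A * 2⁻¹ ^ n := by
    intro n
    induction n with
    | zero => exact ⟨A, subset_rfl, hA, hA0, by simp⟩
    | succ n ih =>
      obtain ⟨B, hBA, hB, hB0, hBle⟩ := ih
      obtain ⟨C, hCB, hC, hC0, hCle⟩ := hμ.exists_subset_measure_pos_le_half hB hB0
      refine ⟨C, hCB.trans hBA, hC, hC0, ?_⟩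
      calc μ C ≤ μ B / 2 := hCle
        _ ≤ μ A * 2⁻¹ ^ n / 2 := by gcongr
        _ = μ A * 2⁻¹ ^ (n + 1) := by rw [pow_succ, ← mul_assoc, div_eq_mul_inv]
  have hlim : Tendsto (fun n : ℕ => μ A * 2⁻¹ ^ n) atTop (𝓝 0) := by
    simpa using ENNReal.Tendsto.const_mul
      (ENNReal.tendsto_pow_atTop_nhds_zero_of_lt_one (by norm_num)) (Or.inr (measure_ne_top μ A))
  obtain ⟨n, hn⟩ := (hlim.eventually (gt_mem_nhds (pos_iff_ne_zero.mpr hε))).exists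
  obtain ⟨B, hBA, hB, hB0, hBle⟩ := hpow n
  exact ⟨B, hBA, hB, hB0, hBle.trans hn.le⟩

lemma SigmaAlgebraAtomless.exists_subset_measure_mem_Ioc (hμ : SigmaAlgebraAtomless m μ)
    {A : Set Ω} (hA : MeasurableSet A) {r : ℝ≥0∞} (hr0 : r ≠ 0) (hrA : r < μ A) :
    ∃ B ⊆ A, MeasurableSet B ∧ r < μ B ∧ μ B ≤ 2 * r := by
  by_contra! hgap
  set 𝒮 : Set (Set Ω) := {B | B ⊆ A ∧ MeasurableSet B ∧ μ B ≤ r}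
  have hunion : ∀ B ∈ 𝒮, ∀ C ∈ 𝒮, B ∪ C ∈ 𝒮 := by
    rintro B ⟨hBA, hB, hBr⟩ C ⟨hCA, hC, hCr⟩
    refine ⟨union_subset hBA hCA, hB.union hC, not_lt.mp fun hlt => ?_⟩
    refine (hgap _ (union_subset hBA hCA) (hB.union hC) hlt).not_ge ?_
    calc μ (B ∪ C) ≤ μ B + μ C := measure_union_le B C
      _ ≤ 2 * r := by rw [two_mul]; gcongr
  have hiUnion : ∀ f : ℕ → Set Ω, Monotone f → (∀ n, f n ∈ 𝒮) → ⋃ n, f n ∈ 𝒮 := by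
    intro f hf hf𝒮
    refine ⟨iUnion_subset fun n => (hf𝒮 n).1, .iUnion fun n => (hf𝒮 n).2.1, ?_⟩
    rw [hf.measure_iUnion]
    exact iSup_le fun n => (hf𝒮 n).2.2
  obtain ⟨C, hC𝒮, hCmax⟩ :=
    exists_mem_forall_measure_le_of_iUnion_mem μ (𝒮 := 𝒮) ⟨∅, empty_subset A, .empty, by simp⟩
      hunion hiUnion
  obtain ⟨hCA, hC, hCr⟩ := hC𝒮
  have hAC : 0 < μ (A \ C) := by
    rw [measure_sdiff hCA hC.nullMeasurableSet (measure_ne_top μ C)]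
    exact tsub_pos_of_lt (hCr.trans_lt hrA)
  obtain ⟨D, hDAC, hD, hD0, hDr⟩ := hμ.exists_subset_measure_pos_le (hA.diff hC) hAC hr0
  have hCD : μ (C ∪ D) ≤ μ C :=
    hCmax _ (hunion C ⟨hCA, hC, hCr⟩ D ⟨hDAC.trans sdiff_subset, hD, hDr⟩)
  rw [measure_union (disjoint_sdiff_right.mono_right hDAC) hD] at hCD
  exact (ENNReal.lt_add_right (measure_ne_top μ C) hD0.ne').not_ge hCD

lemma SigmaAlgebraAtomless.exists_subset_measureReal_le_and_measureReal_sdiff_le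
    (hμ : SigmaAlgebraAtomless m μ) {A : Set Ω} (hA : MeasurableSet A) :
    ∃ B ⊆ A, MeasurableSet B ∧ μ.real B ≤ 3 / 4 * μ.real A ∧
      μ.real (A \ B) ≤ 3 / 4 * μ.real A := by
  rcases (zero_le : 0 ≤ μ A).eq_or_lt with hA0 | hA0
  · have hA0' : μ.real A = 0 := by simp [Measure.real, ← hA0]
    exact ⟨∅, empty_subset A, .empty, by simp [hA0'], by simp [hA0']⟩
  have hhalf : μ A / 2 ≠ 0 := (ENNReal.half_pos hA0.ne').ne'
  obtain ⟨B, hBA, hB, hrB, hBr⟩ := hμ.exists_subset_measure_mem_Ioc hA (r := μ A / 2 / 2)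
    (ENNReal.half_pos hhalf).ne' ((ENNReal.half_lt_self hhalf (by finiteness)).trans
      (ENNReal.half_lt_self hA0.ne' (by finiteness)))
  have hrB' : μ.real A / 2 / 2 < μ.real B := by
    simpa [Measure.real] using ENNReal.toReal_strict_mono (measure_ne_top μ B) hrB
  have hBr' : μ.real B ≤ 2 * (μ.real A / 2 / 2) := by
    simpa [Measure.real] using ENNReal.toReal_mono (by finiteness) hBr
  refine ⟨B, hBA, hB, by linarith, ?_⟩
  rw [measureReal_sdiff hBA hB]
  linarith

lemma SigmaAlgebraAtomless.exists_isBisection (hμ : SigmaAlgebraAtomless m μ) :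
    ∃ bis : Set Ω → Set Ω, IsBisection μ (3 / 4) bis := by
  choose! bis hbisA hbis hbis_inter hbis_sdiff using
    fun A (hA : MeasurableSet A) => hμ.exists_subset_measureReal_le_and_measureReal_sdiff_le hA
  refine ⟨bis, hbis, fun A hA => ?_, hbis_sdiff⟩
  rw [inter_eq_right.mpr (hbisA A hA)]
  exact hbis_inter A hA

lemma SigmaAlgebraAtomless.exists_measurable_nullSingletonClass_map
    (hμ : SigmaAlgebraAtomless m μ) :
    ∃ X : Ω → ℝ, Measurable X ∧ NullSingletonClass (μ.map X) := by
  obtain ⟨bis, hbis⟩ := hμ.exists_isBisection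
  have he := measurableEmbedding_embeddingReal (ℕ → Bool)
  have hX := he.measurable.comp (Bisection.measurable_code hbis.measurableSet)
  refine ⟨embeddingReal _ ∘ Bisection.code bis, hX, ⟨fun x => ?_⟩⟩
  rw [Measure.map_apply hX (measurableSet_singleton x)]
  by_cases hx : x ∈ range (embeddingReal (ℕ → Bool))
  · obtain ⟨y, rfl⟩ := hx
    refine measure_mono_null (fun ω hω => he.injective hω) ?_
    exact Bisection.measure_preimage_code_singleton hbis (by norm_num) (by norm_num) y
  · rw [preimage_comp, preimage_singleton_eq_empty.mpr hx, preimage_empty, measure_empty]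

end Atomless

lemma SigmaAlgebraAtomless.exists_measurable_map_eq_volume_restrict {Ω : Type*}
    {m : MeasurableSpace Ω} {μ : Measure Ω} [IsProbabilityMeasure μ]
    (hμ : SigmaAlgebraAtomless m μ) :
    ∃ U : Ω → ℝ, Measurable U ∧ (∀ ω, U ω ∈ Icc (0 : ℝ) 1) ∧
      μ.map U = volume.restrict (Icc 0 1) := by
  obtain ⟨X, hX, hXatoms⟩ := hμ.exists_measurable_nullSingletonClass_map
  have : IsProbabilityMeasure (μ.map X) := Measure.isProbabilityMeasure_map hX.aemeasurable
  have hF := (monotone_cdf (μ.map X)).measurable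
  refine ⟨cdf (μ.map X) ∘ X, hF.comp hX, fun ω => ⟨cdf_nonneg _ _, cdf_le_one _ _⟩, ?_⟩
  rw [← Measure.map_map hF hX, map_cdf_eq_volume_restrict]

lemma SigmaAlgebraAtomless.trim {Ω : Type*} {mB : MeasurableSpace Ω} [m : MeasurableSpace Ω]
    {μ : Measure Ω} (hμ : SigmaAlgebraAtomless mB μ) (hmB : mB ≤ m) :
    @SigmaAlgebraAtomless Ω mB mB (μ.trim hmB) := by
  intro A hA hA0
  rw [trim_measurableSet_eq hmB hA] at hA0 ⊢
  obtain ⟨B, hB, hBA, hB0, hBA'⟩ := hμ A hA hA0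
  exact ⟨B, hB, hBA, by rw [trim_measurableSet_eq hmB hB]; exact ⟨hB0, hBA'⟩⟩

lemma SigmaAlgebraAtomless.exists_measurable_map_eq_volume_restrict_of_le {Ω : Type*}
    {mB : MeasurableSpace Ω} [m : MeasurableSpace Ω] {μ : Measure Ω} [IsProbabilityMeasure μ]
    (hμ : SigmaAlgebraAtomless mB μ) (hmB : mB ≤ m) :
    ∃ U : Ω → ℝ, Measurable[mB] U ∧ (∀ ω, U ω ∈ Icc (0 : ℝ) 1) ∧
      μ.map U = volume.restrict (Icc 0 1) := by
  have : IsProbabilityMeasure (μ.trim hmB) :=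
    ⟨by rw [trim_measurableSet_eq hmB .univ, measure_univ]⟩
  obtain ⟨U, hU, hU01, hUmap⟩ := (hμ.trim hmB).exists_measurable_map_eq_volume_restrict
  refine ⟨U, hU, hU01, ?_⟩
  rw [← hUmap]
  ext s hs
  rw [Measure.map_apply (hU.mono hmB le_rfl) hs, Measure.map_apply hU hs,
    trim_measurableSet_eq hmB (hU hs)]

theorem exists_uniform_indep_of_atomless_indep_general {Ω : Type*} (m1 : MeasurableSpace Ω)
    (mB : MeasurableSpace Ω) [m2 : MeasurableSpace Ω] (hmB : mB ≤ m2)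
    (μ : Measure Ω) [IsProbabilityMeasure μ]
    (hatomless : @SigmaAlgebraAtomless Ω mB m2 μ) (hindep : @Indep Ω mB m1 m2 μ) :
    ∃ U : Ω → ℝ, Measurable U ∧ (∀ ω, U ω ∈ Set.Icc (0 : ℝ) 1) ∧
      μ.map U = (volume : Measure ℝ).restrict (Set.Icc 0 1) ∧
      @Indep Ω (MeasurableSpace.comap U inferInstance) m1 m2 μ := by
  obtain ⟨U, hU, hU01, hUmap⟩ := hatomless.exists_measurable_map_eq_volume_restrict_of_le hmB
  exact ⟨U, hU.mono hmB le_rfl, hU01, hUmap, indep_of_indep_of_le_left hindep hU.comap_le⟩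

theorem exists_uniform_indep_of_atomless_indep {Ω : Type*} (m1 : MeasurableSpace Ω)
    (mB : MeasurableSpace Ω) [m2 : MeasurableSpace Ω] (hm1 : m1 ≤ m2) (hmB : mB ≤ m2)
    (μ : Measure Ω) [IsProbabilityMeasure μ]
    (hatomless : @SigmaAlgebraAtomless Ω mB m2 μ) (hindep : @Indep Ω mB m1 m2 μ) :
    ∃ U : Ω → ℝ, Measurable U ∧ (∀ ω, U ω ∈ Set.Icc (0 : ℝ) 1) ∧
      μ.map U = (volume : Measure ℝ).restrict (Set.Icc 0 1) ∧
      @Indep Ω (MeasurableSpace.comap U inferInstance) m1 m2 μ :=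
  exists_uniform_indep_of_atomless_indep_general m1 mB (m2 := m2) hmB μ hatomless hindep
end

section
/- Let ξ and η be commonotone real random variables on a probability space. Then there exist nondecreasing functions f, g : ℝ → ℝ such that ξ = f(ξ + η) and η = g(ξ + η) almost surely. -/
open MeasureTheory ProbabilityTheory

/-!
If `ξ = f ∘ ζ` and `η = g ∘ ζ` with `f`, `g` nondecreasing, then `f` is a nondecreasing function
of `f + g`, namely `t ↦ ⨅ x, max (f x) (t - g x)`: the infimum is attained at `x = y` when
`t = f y + g y`, since `f x ≥ f y` for `x ≥ y` and `t - g x ≥ f y` for `x ≤ y`.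
-/

section RecoverFromSum

variable {α : Type*} [LinearOrder α] {f g : α → ℝ}

noncomputable def recoverFromSum (f g : α → ℝ) (t : ℝ) : ℝ :=
  ⨅ x, max (f x) (t - g x)

lemma bddBelow_range_max_sub (hf : Monotone f) (hg : Monotone g) (t : ℝ) :
    BddBelow (Set.range fun x => max (f x) (t - g x)) := by
  rcases isEmpty_or_nonempty α with _ | ⟨⟨x₀⟩⟩
  · simp [Set.range_eq_empty]
  refine ⟨min (f x₀) (t - g x₀), ?_⟩
  rintro _ ⟨x, rfl⟩
  rcases le_total x₀ x with h | h
  · exact min_le_left _ _ |>.trans <| (hf h).trans (le_max_left _ _)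
  · exact min_le_right _ _ |>.trans <| (by linarith [hg h] : t - g x₀ ≤ t - g x).trans
      (le_max_right _ _)

lemma monotone_recoverFromSum (hf : Monotone f) (hg : Monotone g) :
    Monotone (recoverFromSum f g) := fun _ _ hst =>
  ciInf_mono (bddBelow_range_max_sub hf hg _) fun _ => by gcongr

lemma recoverFromSum_add (hf : Monotone f) (hg : Monotone g) (y : α) :
    recoverFromSum f g (f y + g y) = f y := by
  have : Nonempty α := ⟨y⟩
  have hmin : ∀ x, f y ≤ max (f x) (f y + g y - g x) := fun x => by
    rcases le_total y x with h | h
    · exact (hf h).trans (le_max_left _ _)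
    · exact le_max_of_le_right (by linarith [hg h])
  refine le_antisymm ?_ (le_ciInf hmin)
  calc recoverFromSum f g (f y + g y) ≤ max (f y) (f y + g y - g y) :=
        ciInf_le (bddBelow_range_max_sub hf hg _) y
    _ = f y := by simp

end RecoverFromSum

theorem commonotone_sum_representation_general {Ω : Type*} [MeasurableSpace Ω]
    (μ : Measure Ω) (ξ η : Ω → ℝ) (hcom : Commonotone μ ξ η) :
    ∃ f g : ℝ → ℝ, Monotone f ∧ Monotone g ∧
      ξ =ᵐ[μ] (fun ω => f (ξ ω + η ω)) ∧ η =ᵐ[μ] (fun ω => g (ξ ω + η ω)) := by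
  obtain ⟨f, g, ζ, hf, hg, -, hξ, hη⟩ := hcom
  refine ⟨recoverFromSum f g, recoverFromSum g f, monotone_recoverFromSum hf hg,
    monotone_recoverFromSum hg hf, ?_, ?_⟩
  · filter_upwards [hξ, hη] with ω hξω hηω
    rw [hξω, hηω, recoverFromSum_add hf hg]
  · filter_upwards [hξ, hη] with ω hξω hηω
    rw [hξω, hηω, add_comm, recoverFromSum_add hg hf]

theorem commonotone_sum_representation {Ω : Type*} [MeasurableSpace Ω]
    (μ : Measure Ω) [IsProbabilityMeasure μ] (ξ η : Ω → ℝ) (hξ : Measurable ξ)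
    (hη : Measurable η) (hcom : Commonotone μ ξ η) :
    ∃ f g : ℝ → ℝ, Monotone f ∧ Monotone g ∧
      ξ =ᵐ[μ] (fun ω => f (ξ ω + η ω)) ∧ η =ᵐ[μ] (fun ω => g (ξ ω + η ω)) :=
  commonotone_sum_representation_general μ ξ η hcom
end

section
/- Two real random variables ξ, η on a probability space are commonotone if and only if the (topological) support of the image measure of the ℝ²-valued random variable (ξ, η) (i.e., the support of the law of (ξ, η) on ℝ²) is a commonotone subset of ℝ². -/
open MeasureTheory

/-- A subset `E ⊆ ℝ²` is commonotone if `(x - x')(y - y') ≥ 0` for all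
`(x, y), (x', y') ∈ E`. -/
def CommonotoneSet (E : Set (ℝ × ℝ)) : Prop :=
  ∀ p ∈ E, ∀ q ∈ E, 0 ≤ (p.1 - q.1) * (p.2 - q.2)

/-- The topological support of a measure: the set of points all of whose open
neighbourhoods have positive measure.  Its complement is the largest open null set. -/
def measureSupport {X : Type*} [TopologicalSpace X] [MeasurableSpace X]
    (μ : Measure X) : Set X :=
  {x | ∀ U : Set X, IsOpen U → x ∈ U → 0 < μ U}

lemma isOpen_compl_measureSupport {X : Type*} [TopologicalSpace X] [MeasurableSpace X]
    (μ : Measure X) : IsOpen (measureSupport μ)ᶜ := by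
  rw [isOpen_iff_mem_nhds]
  intro x hx
  simp only [measureSupport, Set.mem_compl_iff, Set.mem_setOf_eq] at hx
  push_neg at hx
  obtain ⟨U, hUo, hxU, hU0⟩ := hx
  refine Filter.mem_of_superset (hUo.mem_nhds hxU) ?_
  intro y hy
  simp only [measureSupport, Set.mem_compl_iff, Set.mem_setOf_eq]
  push_neg
  exact ⟨U, hUo, hy, hU0⟩

lemma measureSupport_compl_null {X : Type*} [TopologicalSpace X]
    [SecondCountableTopology X] [MeasurableSpace X]
    (μ : Measure X) : μ (measureSupport μ)ᶜ = 0 := by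
  obtain ⟨b, hbc, -, hb⟩ := TopologicalSpace.exists_countable_basis X
  have hcover : (measureSupport μ)ᶜ ⊆ ⋃₀ {U | U ∈ b ∧ μ U = 0} := by
    intro x hx
    simp only [measureSupport, Set.mem_compl_iff, Set.mem_setOf_eq] at hx
    push_neg at hx
    obtain ⟨U, hUo, hxU, hU0⟩ := hx
    obtain ⟨V, hVb, hxV, hVU⟩ := hb.isOpen_iff.mp hUo x hxU
    exact ⟨V, ⟨hVb, le_antisymm (le_trans (measure_mono hVU) hU0) bot_le⟩, hxV⟩
  refine measure_mono_null hcover ?_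
  rw [measure_sUnion_null_iff (hbc.mono (fun U hU => hU.1))]
  exact fun U hU => hU.2

/-- On a nonempty commonotone set, the first coordinate is a monotone function of the sum. -/
lemma commonotone_exists_mono_fst {S : Set (ℝ × ℝ)} (hS : CommonotoneSet S)
    (hne : S.Nonempty) :
    ∃ f : ℝ → ℝ, Monotone f ∧ ∀ p ∈ S, f (p.1 + p.2) = p.1 := by
  haveI : Nonempty S := hne.to_subtype
  obtain ⟨p₀, hp₀⟩ := hne
  set F : ℝ → ℝ := fun t => ⨅ p : S, ((p : ℝ × ℝ).1 + max (t - (p : ℝ × ℝ).1 - (p : ℝ × ℝ).2) 0)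
    with hF
  have hterm_ge₁ : ∀ (t : ℝ) (p : ℝ × ℝ),
      p.1 ≤ p.1 + max (t - p.1 - p.2) 0 := by
    intro t p
    nlinarith [le_max_right (t - p.1 - p.2) (0:ℝ)]
  have hterm_ge₂ : ∀ (t : ℝ) (p : ℝ × ℝ),
      t - p.2 ≤ p.1 + max (t - p.1 - p.2) 0 := by
    intro t p
    nlinarith [le_max_left (t - p.1 - p.2) (0:ℝ)]
  have hbdd : ∀ t : ℝ, BddBelow (Set.range fun p : S =>
      ((p : ℝ × ℝ).1 + max (t - (p : ℝ × ℝ).1 - (p : ℝ × ℝ).2) 0)) := by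
    intro t
    refine ⟨min p₀.1 (t - p₀.2), ?_⟩
    rintro x ⟨p, rfl⟩
    rcases le_or_gt p₀.1 (p : ℝ × ℝ).1 with h | h
    · calc min p₀.1 (t - p₀.2) ≤ p₀.1 := min_le_left _ _
        _ ≤ (p : ℝ × ℝ).1 := h
        _ ≤ _ := hterm_ge₁ t _
    · have h2 : (p : ℝ × ℝ).2 ≤ p₀.2 := by nlinarith [hS p p.2 p₀ hp₀]
      calc min p₀.1 (t - p₀.2) ≤ t - p₀.2 := min_le_right _ _
        _ ≤ t - (p : ℝ × ℝ).2 := by linarith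
        _ ≤ _ := hterm_ge₂ t _
  refine ⟨F, ?_, ?_⟩
  · intro t t' htt'
    refine ciInf_mono (hbdd t) ?_
    intro p
    have : max (t - (p : ℝ × ℝ).1 - (p : ℝ × ℝ).2) 0 ≤
        max (t' - (p : ℝ × ℝ).1 - (p : ℝ × ℝ).2) 0 :=
      max_le_max (by linarith) le_rfl
    linarith
  · intro p hp
    have hle : F (p.1 + p.2) ≤ p.1 := by
      have := ciInf_le (hbdd (p.1 + p.2)) (⟨p, hp⟩ : S)
      simpa using this
    have hge : p.1 ≤ F (p.1 + p.2) := by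
      refine le_ciInf ?_
      rintro ⟨q, hq⟩
      have hprod := hS q hq p hp
      simp only
      rcases lt_or_ge q.1 p.1 with h | h
      · have h2 : q.2 ≤ p.2 := by nlinarith
        have : p.1 + p.2 - q.1 - q.2 ≤ max (p.1 + p.2 - q.1 - q.2) 0 :=
          le_max_left _ _
        linarith
      · have : (0:ℝ) ≤ max (p.1 + p.2 - q.1 - q.2) 0 := le_max_right _ _
        linarith
    linarith

lemma commonotone_swap {S : Set (ℝ × ℝ)} (hS : CommonotoneSet S) :
    CommonotoneSet (Prod.swap '' S) := by
  rintro p ⟨a, ha, rfl⟩ q ⟨b, hb, rfl⟩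
  have := hS a ha b hb
  simp only [Prod.fst_swap, Prod.snd_swap]
  nlinarith

theorem commonotone_iff_support_commonotone {Ω : Type*} [MeasurableSpace Ω]
    (μ : Measure Ω) [IsProbabilityMeasure μ] (ξ η : Ω → ℝ)
    (hξ : Measurable ξ) (hη : Measurable η) :
    Commonotone μ ξ η ↔
      CommonotoneSet (measureSupport (μ.map (fun ω => (ξ ω, η ω)))) := by
  have hmeas : Measurable fun ω => (ξ ω, η ω) := hξ.prodMk hη
  set ν : Measure (ℝ × ℝ) := μ.map (fun ω => (ξ ω, η ω)) with hν
  haveI : IsProbabilityMeasure ν := Measure.isProbabilityMeasure_map hmeas.aemeasurable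
  set S : Set (ℝ × ℝ) := measureSupport ν with hSdef
  have hScompl_meas : MeasurableSet Sᶜ := (isOpen_compl_measureSupport ν).measurableSet
  constructor
  · -- Commonotone → support commonotone
    rintro ⟨f, g, ζ, hf, hg, hζ, hfe, hge⟩
    have hG : ∀ᵐ ω ∂μ, ξ ω = f (ζ ω) ∧ η ω = g (ζ ω) := hfe.and hge
    have hGnull : μ {ω | ¬ (ξ ω = f (ζ ω) ∧ η ω = g (ζ ω))} = 0 := by
      rw [← MeasureTheory.ae_iff]; exact hG
    -- any open set around a support point contains a "good" sample point
    have key : ∀ p ∈ S, ∀ U : Set (ℝ × ℝ), IsOpen U → p ∈ U →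
        ∃ ω, (ξ ω, η ω) ∈ U ∧ ξ ω = f (ζ ω) ∧ η ω = g (ζ ω) := by
      intro p hp U hU hpU
      have hpos : 0 < ν U := hp U hU hpU
      have hmap : ν U = μ ((fun ω => (ξ ω, η ω)) ⁻¹' U) :=
        Measure.map_apply hmeas hU.measurableSet
      set A := (fun ω => (ξ ω, η ω)) ⁻¹' U with hA
      set G := {ω | ξ ω = f (ζ ω) ∧ η ω = g (ζ ω)} with hGdef
      have hAG : μ (A ∩ G) ≠ 0 := by
        intro hz
        have h1 : μ A ≤ μ (A ∩ G) + μ (A ∩ Gᶜ) := by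
          calc μ A = μ ((A ∩ G) ∪ (A ∩ Gᶜ)) := by rw [Set.inter_union_compl]
            _ ≤ μ (A ∩ G) + μ (A ∩ Gᶜ) := measure_union_le _ _
        have h2 : μ (A ∩ Gᶜ) ≤ μ {ω | ¬ (ξ ω = f (ζ ω) ∧ η ω = g (ζ ω))} :=
          measure_mono (fun ω hω => hω.2)
        have h3 : μ A = 0 := by
          refine le_antisymm ?_ bot_le
          calc μ A ≤ μ (A ∩ G) + μ (A ∩ Gᶜ) := h1
            _ ≤ 0 + μ {ω | ¬ (ξ ω = f (ζ ω) ∧ η ω = g (ζ ω))} := add_le_add hz.le h2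
            _ = 0 := by rw [hGnull, zero_add]
        rw [hmap, h3] at hpos
        exact lt_irrefl _ hpos
      obtain ⟨ω, hωA, hωG⟩ := MeasureTheory.nonempty_of_measure_ne_zero hAG
      exact ⟨ω, hωA, hωG⟩
    have keyfalse : ∀ p ∈ S, ∀ q ∈ S, p.1 < q.1 → q.2 < p.2 → False := by
      intro p hp q hq h1 h2
      set ε : ℝ := min (q.1 - p.1) (p.2 - q.2) / 2 with hε
      have hεpos : 0 < ε := by
        have := lt_min (by linarith : (0:ℝ) < q.1 - p.1) (by linarith : (0:ℝ) < p.2 - q.2)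
        positivity
      have hε1 : ε ≤ (q.1 - p.1) / 2 := by
        have := min_le_left (q.1 - p.1) (p.2 - q.2); linarith
      have hε2 : ε ≤ (p.2 - q.2) / 2 := by
        have := min_le_right (q.1 - p.1) (p.2 - q.2); linarith
      obtain ⟨ω, hωU, hωf, hωg⟩ := key p hp
        (Set.Ioo (p.1 - ε) (p.1 + ε) ×ˢ Set.Ioo (p.2 - ε) (p.2 + ε))
        (isOpen_Ioo.prod isOpen_Ioo)
        (by constructor <;> constructor <;> simp <;> linarith)
      obtain ⟨ω', hω'U, hω'f, hω'g⟩ := key q hq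
        (Set.Ioo (q.1 - ε) (q.1 + ε) ×ˢ Set.Ioo (q.2 - ε) (q.2 + ε))
        (isOpen_Ioo.prod isOpen_Ioo)
        (by constructor <;> constructor <;> simp <;> linarith)
      obtain ⟨⟨hx1, hx2⟩, ⟨hy1, hy2⟩⟩ := hωU
      obtain ⟨⟨hx1', hx2'⟩, ⟨hy1', hy2'⟩⟩ := hω'U
      have hfo : f (ζ ω) < f (ζ ω') := by
        rw [← hωf, ← hω'f]; linarith
      have hζo : ζ ω ≤ ζ ω' := by
        by_contra hc
        push_neg at hc
        exact absurd (hf hc.le) (not_le.mpr hfo)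
      have hgo : g (ζ ω) ≤ g (ζ ω') := hg hζo
      rw [← hωg, ← hω'g] at hgo
      linarith
    intro p hp q hq
    by_contra hcon
    push_neg at hcon
    rcases mul_neg_iff.mp hcon with ⟨h1, h2⟩ | ⟨h1, h2⟩
    · exact keyfalse q hq p hp (by linarith) (by linarith)
    · exact keyfalse p hp q hq (by linarith) (by linarith)
  · -- support commonotone → Commonotone
    intro hS
    have hnull : ν Sᶜ = 0 := measureSupport_compl_null ν
    have hne : S.Nonempty := by
      by_contra hc
      rw [Set.not_nonempty_iff_eq_empty] at hc
      have : ν Set.univ = 0 := by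
        rw [← Set.compl_empty, ← hc]; exact hnull
      rw [measure_univ] at this
      simp at this
    obtain ⟨f, hf, hfval⟩ := commonotone_exists_mono_fst hS hne
    obtain ⟨g, hg, hgval⟩ := commonotone_exists_mono_fst (commonotone_swap hS)
      (hne.image Prod.swap)
    have hae : ∀ᵐ ω ∂μ, (ξ ω, η ω) ∈ S := by
      rw [ae_iff]
      have : {ω | ¬ (ξ ω, η ω) ∈ S} = (fun ω => (ξ ω, η ω)) ⁻¹' Sᶜ := rfl
      rw [this, ← Measure.map_apply hmeas hScompl_meas]
      exact hnull
    refine ⟨f, g, fun ω => ξ ω + η ω, hf, hg, hξ.add hη, ?_, ?_⟩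
    · filter_upwards [hae] with ω hω
      exact (hfval (ξ ω, η ω) hω).symm
    · filter_upwards [hae] with ω hω
      have := hgval (η ω, ξ ω) ⟨(ξ ω, η ω), hω, rfl⟩
      simp only at this
      rw [add_comm] at this
      exact this.symm
end

section
/- There exist a commonotone Borel subset E ⊆ ℝ², a constant C ≥ 1, and Borel measurable functions λ : ℝ² → [0,1] and p₁, p₂ : ℝ² → ℝ² with p₁(x,y), p₂(x,y) ∈ E for all (x,y), such that for every (x, y) ∈ ℝ²: (i) (x, y) = λ(x,y) · p₁(x,y) + (1 − λ(x,y)) · p₂(x,y); (ii) ‖pᵢ(x,y)‖ ≤ C · max(‖(x,y)‖, 1) for i = 1, 2, where ‖·‖ denotes the Euclidean norm on ℝ². -/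
open MeasureTheory

/-- The Euclidean norm on `ℝ²`. -/
noncomputable def euclNorm (p : ℝ × ℝ) : ℝ := Real.sqrt (p.1 ^ 2 + p.2 ^ 2)

/-!
`E` is the graph of the nondecreasing function equal to `x / 3` for `x ≤ 0` and to `16 ^ k` on
`[16 ^ k, 16 ^ (k + 1))`; graphs of monotone functions are commonotone. Given `z`, take a power
`A = 16 ^ k` with `16 ‖z‖ ≤ A ≤ 256 max ‖z‖ 1`. Then `z` lies on the segment from `(-3A, -A)`, on
the ray, to a point `(s, A)` of the step at height `A`: the weight `(1 + z.2 / A) / 2` is close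
to `1 / 2`, which forces `s ∈ [A, 4A]`.
-/

theorem commonotoneSet_graph_of_monotone {f : ℝ → ℝ} (hf : Monotone f) :
    CommonotoneSet {p | p.2 = f p.1} := by
  rintro p (hp : p.2 = f p.1) q (hq : q.2 = f q.1)
  rw [hp, hq]
  rcases le_total p.1 q.1 with h | h
  · exact mul_nonneg_of_nonpos_of_nonpos (sub_nonpos.2 h) (sub_nonpos.2 (hf h))
  · exact mul_nonneg (sub_nonneg.2 h) (sub_nonneg.2 (hf h))

theorem norm_le_euclNorm (p : ℝ × ℝ) : ‖p‖ ≤ euclNorm p := by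
  rw [Prod.norm_def, Real.norm_eq_abs, Real.norm_eq_abs]
  exact max_le (Real.abs_le_sqrt (by nlinarith)) (Real.abs_le_sqrt (by nlinarith))

theorem euclNorm_le_two_mul_norm (p : ℝ × ℝ) : euclNorm p ≤ 2 * ‖p‖ := by
  rw [Prod.norm_def, Real.norm_eq_abs, Real.norm_eq_abs]
  refine Real.sqrt_le_iff.2 ⟨by positivity, ?_⟩
  have h₁ := le_max_left |p.1| |p.2|
  have h₂ := le_max_right |p.1| |p.2|
  nlinarith [sq_abs p.1, sq_abs p.2, abs_nonneg p.1, abs_nonneg p.2]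

noncomputable def stair (x : ℝ) : ℝ := if x ≤ 0 then x / 3 else 16 ^ Int.log 16 x

theorem stair_of_nonpos {x : ℝ} (hx : x ≤ 0) : stair x = x / 3 := if_pos hx

theorem stair_of_pos {x : ℝ} (hx : 0 < x) : stair x = 16 ^ Int.log 16 x := if_neg hx.not_ge

theorem stair_pos {x : ℝ} (hx : 0 < x) : 0 < stair x := by
  rw [stair_of_pos hx]; positivity

theorem monotone_stair : Monotone stair := by
  intro x y hxy
  rcases le_or_gt y 0 with hy | hy
  · rw [stair_of_nonpos hy, stair_of_nonpos (hxy.trans hy)]; linarith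
  rcases le_or_gt x 0 with hx | hx
  · rw [stair_of_nonpos hx]; linarith [stair_pos hy]
  rw [stair_of_pos hx, stair_of_pos hy]
  exact zpow_le_zpow_right₀ (by norm_num) (Int.log_mono_right hx hxy)

theorem stair_le_self {x : ℝ} (hx : 0 < x) : stair x ≤ x := by
  rw [stair_of_pos hx]; exact_mod_cast Int.zpow_log_le_self (b := 16) (by norm_num) hx

theorem lt_sixteen_mul_stair {x : ℝ} (hx : 0 < x) : x < 16 * stair x := by
  rw [stair_of_pos hx, ← zpow_one_add₀ (by norm_num), add_comm]
  exact_mod_cast Int.lt_zpow_succ_log_self (b := 16) (by norm_num) x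

theorem stair_eq_of_le_of_lt {x s : ℝ} (hx : 0 < x) (h₁ : stair x ≤ s) (h₂ : s < 16 * stair x) :
    stair s = stair x := by
  have hs : 0 < s := (stair_pos hx).trans_le h₁
  rw [stair_of_pos hx] at h₁ h₂
  rw [← zpow_one_add₀ (by norm_num), add_comm] at h₂
  have hlo := (Int.zpow_le_iff_le_log (b := 16) (by norm_num) hs).1 (by exact_mod_cast h₁)
  have hhi := (Int.lt_zpow_iff_log_lt (b := 16) (by norm_num) hs).1 (by exact_mod_cast h₂)
  rw [stair_of_pos hs, stair_of_pos hx, show Int.log 16 s = Int.log 16 x by omega]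

noncomputable def weight (A : ℝ) (z : ℝ × ℝ) : ℝ := (1 + z.2 / A) / 2

noncomputable def upperPt (A : ℝ) (z : ℝ × ℝ) : ℝ × ℝ :=
  ((z.1 + 3 * A * (1 - weight A z)) / weight A z, A)

def lowerPt (A : ℝ) : ℝ × ℝ := (-(3 * A), -A)

section Decomposition

variable {A : ℝ} {z : ℝ × ℝ}

theorem abs_le_of_sixteen_mul_norm_le (hz : 16 * ‖z‖ ≤ A) : |z.1| ≤ A / 16 ∧ |z.2| ≤ A / 16 := by
  rw [← Real.norm_eq_abs, ← Real.norm_eq_abs]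
  constructor <;> linarith [norm_fst_le z, norm_snd_le z]

theorem weight_mem_Icc (hA : 0 < A) (hz : 16 * ‖z‖ ≤ A) :
    weight A z ∈ Set.Icc (15 / 32) (17 / 32) := by
  have hy : |z.2 / A| ≤ 1 / 16 := by
    rw [abs_div, abs_of_pos hA, div_le_iff₀ hA]
    linarith [(abs_le_of_sixteen_mul_norm_le hz).2]
  constructor <;> unfold weight <;> linarith [abs_le.1 hy]

theorem upperPt_fst_mem_Icc (hA : 0 < A) (hz : 16 * ‖z‖ ≤ A) :
    (upperPt A z).1 ∈ Set.Icc A (4 * A) := by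
  obtain ⟨hw₁, hw₂⟩ := weight_mem_Icc hA hz
  have hx := abs_le.1 (abs_le_of_sixteen_mul_norm_le hz).1
  have hw : 0 < weight A z := by linarith
  constructor
  · rw [upperPt, le_div_iff₀ hw]; nlinarith
  · rw [upperPt, div_le_iff₀ hw]; nlinarith

theorem norm_upperPt_le (hA : 0 < A) (hz : 16 * ‖z‖ ≤ A) : ‖upperPt A z‖ ≤ 4 * A := by
  obtain ⟨hs₁, hs₂⟩ := upperPt_fst_mem_Icc hA hz
  rw [Prod.norm_def, Real.norm_eq_abs, Real.norm_eq_abs, abs_of_pos (hA.trans_le hs₁),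
    upperPt, abs_of_pos hA]
  exact max_le hs₂ (by linarith)

theorem norm_lowerPt_le (hA : 0 < A) : ‖lowerPt A‖ ≤ 4 * A := by
  rw [Prod.norm_def, lowerPt, norm_neg, norm_neg, Real.norm_eq_abs, Real.norm_eq_abs,
    abs_of_pos hA, abs_of_pos (by positivity)]
  exact max_le (by linarith) (by linarith)

theorem weight_smul_upperPt_add_lowerPt (hA : 0 < A) (hz : 16 * ‖z‖ ≤ A) :
    z = weight A z • upperPt A z + (1 - weight A z) • lowerPt A := by
  have hw : weight A z ≠ 0 := by linarith [(weight_mem_Icc hA hz).1]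
  ext
  · simp only [upperPt, lowerPt, Prod.fst_add, Prod.smul_fst, smul_eq_mul]
    field_simp
    ring
  · simp only [upperPt, lowerPt, weight, Prod.snd_add, Prod.smul_snd, smul_eq_mul]
    field_simp
    ring

end Decomposition

noncomputable def scale (z : ℝ × ℝ) : ℝ := stair (256 * max ‖z‖ 1)

@[fun_prop]
theorem measurable_scale : Measurable scale :=
  monotone_stair.measurable.comp ((measurable_norm.max measurable_const).const_mul _)

theorem scale_pos (z : ℝ × ℝ) : 0 < scale z := stair_pos (by positivity)

theorem scale_le (z : ℝ × ℝ) : scale z ≤ 256 * max ‖z‖ 1 := stair_le_self (by positivity)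

theorem sixteen_mul_norm_le_scale (z : ℝ × ℝ) : 16 * ‖z‖ ≤ scale z := by
  have := lt_sixteen_mul_stair (x := 256 * max ‖z‖ 1) (by positivity)
  have := le_max_left ‖z‖ 1
  rw [scale]; linarith

theorem euclNorm_le_of_norm_le_four_mul_scale {p z : ℝ × ℝ} (h : ‖p‖ ≤ 4 * scale z) :
    euclNorm p ≤ 2048 * max (euclNorm z) 1 :=
  calc euclNorm p ≤ 2 * ‖p‖ := euclNorm_le_two_mul_norm p
    _ ≤ 2048 * max ‖z‖ 1 := by linarith [scale_le z]
    _ ≤ 2048 * max (euclNorm z) 1 := by gcongr; exact norm_le_euclNorm z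

theorem upperPt_scale_snd_eq_stair (z : ℝ × ℝ) :
    (upperPt (scale z) z).2 = stair (upperPt (scale z) z).1 := by
  obtain ⟨hs₁, hs₂⟩ := upperPt_fst_mem_Icc (scale_pos z) (sixteen_mul_norm_le_scale z)
  have ht : (0 : ℝ) < 256 * max ‖z‖ 1 := by positivity
  have := scale_pos z
  exact (stair_eq_of_le_of_lt ht hs₁ (by rw [← scale]; linarith)).symm

theorem lowerPt_snd_eq_stair {A : ℝ} (hA : 0 ≤ A) : (lowerPt A).2 = stair (lowerPt A).1 := by
  rw [lowerPt, stair_of_nonpos (by linarith)]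
  ring

theorem exists_special_commonotone_set :
    ∃ (E : Set (ℝ × ℝ)) (C : ℝ) (lam : ℝ × ℝ → ℝ) (p₁ p₂ : ℝ × ℝ → ℝ × ℝ),
      MeasurableSet E ∧ CommonotoneSet E ∧ 1 ≤ C ∧
      Measurable lam ∧ Measurable p₁ ∧ Measurable p₂ ∧
      (∀ z : ℝ × ℝ, lam z ∈ Set.Icc (0 : ℝ) 1) ∧
      (∀ z : ℝ × ℝ, p₁ z ∈ E ∧ p₂ z ∈ E) ∧
      (∀ z : ℝ × ℝ, z = lam z • p₁ z + (1 - lam z) • p₂ z) ∧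
      (∀ z : ℝ × ℝ, euclNorm (p₁ z) ≤ C * max (euclNorm z) 1 ∧
        euclNorm (p₂ z) ≤ C * max (euclNorm z) 1) := by
  have hz := fun z => sixteen_mul_norm_le_scale z
  refine ⟨{p | p.2 = stair p.1}, 2048, fun z => weight (scale z) z, fun z => upperPt (scale z) z,
    fun z => lowerPt (scale z), measurableSet_graph monotone_stair.measurable,
    commonotoneSet_graph_of_monotone monotone_stair, by norm_num, ?_, ?_, ?_, fun z => ?_,
    fun z => ⟨upperPt_scale_snd_eq_stair z, lowerPt_snd_eq_stair (scale_pos z).le⟩,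
    fun z => weight_smul_upperPt_add_lowerPt (scale_pos z) (hz z), fun z => ⟨?_, ?_⟩⟩
  · unfold weight; fun_prop
  · unfold upperPt weight; fun_prop
  · unfold lowerPt; fun_prop
  · exact Set.Icc_subset_Icc (by norm_num) (by norm_num) (weight_mem_Icc (scale_pos z) (hz z))
  · exact euclNorm_le_of_norm_le_four_mul_scale (norm_upperPt_le (scale_pos z) (hz z))
  · exact euclNorm_le_of_norm_le_four_mul_scale (norm_lowerPt_le (scale_pos z))
end
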